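/- arXiv:1909.01257 — 9 statements merged into one kernel-verified Lean document; each statement's English description precedes it below -/
import Mathlib

section
/- The number of ways to place n labeled balls into q unlabeled boxes arranged in a circle (q > n), so that no box contains more than one ball and for i < j the ball i is never in the box immediately clockwise of the box holding ball j, is (q-n)^{n-1}. -/
/-!
Rotate every placement so that ball `0` sits in box `0`. The box just anticlockwise of it is
then empty, so cutting the circle open there leaves balls `1, …, n-1` in a row of `q - 2` boxes,
subject only to the linear condition that no ball sits immediately to the right of a larger one.
In a valid row the largest ball always has an empty box or the end of the row to its right.
Removing that ball together with its box is therefore a bijection onto the valid rows with one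
ball and one box fewer, each paired with one of its free slots (an empty box or the end of the
row). So a row of `m` boxes holds `(m + 1 - n) ^ n` valid placements of `n` balls.
-/

/-- A placement of `n` labeled balls into `q` boxes arranged in a circle: ball `i` goes in
box `f i` (boxes identified with `ZMod q`, clockwise successor of box `b` being `b + 1`),
no box holds more than one ball, and for `i < j` ball `i` is never in the box immediately
clockwise of the box holding ball `j`. -/
def CircularPlacement (n q : ℕ) : Type :=
  {f : Fin n → ZMod q // Function.Injective f ∧
    ∀ i j : Fin n, i < j → f i ≠ f j + 1}

open Function

theorem Nat.card_compl_range_of_injective {α β : Type*} [Finite β] {f : α → β}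
    (hf : Injective f) : Nat.card ↥(Set.range f)ᶜ = Nat.card β - Nat.card α := by
  rw [Nat.card_coe_set_eq, Set.ncard_compl, Set.ncard_range_of_injective hf]

theorem ZMod.natCast_inj_of_lt {q a b : ℕ} (ha : a < q) (hb : b < q) :
    (a : ZMod q) = b ↔ a = b :=
  ⟨fun h => by
    simpa only [ZMod.val_natCast_of_lt ha, ZMod.val_natCast_of_lt hb] using congrArg ZMod.val h,
    congrArg _⟩

namespace Fin

variable {n m : ℕ}

theorem val_succAbove_eq_val_add_one_iff (c : Fin (m + 1)) (x : Fin m) :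
    (c.succAbove x : ℕ) = c + 1 ↔ c = x.castSucc := by
  simp only [succAbove, lt_def, Fin.ext_iff, val_castSucc]
  split_ifs <;> simp only [val_castSucc, val_succ] <;> omega

theorem val_succAbove_eq_val_succAbove_add_one_iff (c : Fin (m + 1)) (x y : Fin m) :
    (c.succAbove x : ℕ) = c.succAbove y + 1 ↔ (x : ℕ) = y + 1 ∧ c ≠ x.castSucc := by
  simp only [succAbove, lt_def, ne_eq, Fin.ext_iff, val_castSucc]
  split_ifs <;> simp only [val_castSucc, val_succ] <;> omega

theorem exists_eq_snoc_succAbove {g : Fin (n + 1) → Fin (m + 1)} (hg : Injective g) :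
    ∃ y : Fin n → Fin m, g = snoc (fun i => (g (last n)).succAbove (y i)) (g (last n)) := by
  have h (i : Fin n) : ∃ x, (g (last n)).succAbove x = g i.castSucc :=
    exists_succAbove_eq (hg.ne (castSucc_lt_last i).ne)
  choose y hy using h
  refine ⟨y, funext fun i => ?_⟩
  induction i using lastCases with
  | last => rw [snoc_last]
  | cast i => rw [snoc_castSucc, hy]

theorem forall_lt_snoc_iff {α : Type*} {r : α → α → Prop} {p : Fin n → α} {c : α} :
    (∀ i j : Fin (n + 1), i < j →
        r (snoc (α := fun _ => α) p c i) (snoc (α := fun _ => α) p c j)) ↔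
      (∀ i j, i < j → r (p i) (p j)) ∧ ∀ i, r (p i) c := by
  refine (List.pairwise_ofFn (R := r) (f := _)).symm.trans ?_
  rw [List.ofFn_succ']
  simp only [snoc_castSucc, snoc_last, List.concat_eq_append, List.pairwise_append,
    List.pairwise_singleton, List.mem_singleton, forall_eq, List.forall_mem_ofFn_iff, true_and,
    List.pairwise_ofFn]

theorem forall_lt_cons_iff {α : Type*} {r : α → α → Prop} {p : Fin n → α} {c : α} :
    (∀ i j : Fin (n + 1), i < j →
        r (cons (α := fun _ => α) c p i) (cons (α := fun _ => α) c p j)) ↔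
      (∀ i, r c (p i)) ∧ ∀ i j, i < j → r (p i) (p j) := by
  refine (List.pairwise_ofFn (R := r) (f := _)).symm.trans ?_
  rw [List.ofFn_cons, List.pairwise_cons, List.forall_mem_ofFn_iff, List.pairwise_ofFn]

end Fin

def IsLinearPlacement {n m : ℕ} (f : Fin n → Fin m) : Prop :=
  Injective f ∧ ∀ i j, i < j → (f i : ℕ) ≠ f j + 1

section LinearPlacement

open Fin

variable {n m : ℕ}

theorem isLinearPlacement_snoc_iff {p : Fin n → Fin m} {c : Fin m} :
    IsLinearPlacement (snoc p c : Fin (n + 1) → Fin m) ↔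
      IsLinearPlacement p ∧ c ∉ Set.range p ∧ ∀ i, (p i : ℕ) ≠ c + 1 := by
  simp only [IsLinearPlacement, snoc_injective_iff,
    forall_lt_snoc_iff (r := fun a b : Fin m => (a : ℕ) ≠ b + 1)]
  tauto

/-- Putting the largest ball into a new box inserted at `c` keeps a linear placement valid
exactly when the old box `c`, which ends up right after the new one, is empty or `c` is the
end of the row. -/
theorem isLinearPlacement_snoc_succAbove_iff {y : Fin n → Fin m} {c : Fin (m + 1)} :
    IsLinearPlacement (snoc (fun i => c.succAbove (y i)) c : Fin (n + 1) → Fin (m + 1)) ↔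
      IsLinearPlacement y ∧ c ∉ Set.range fun i => (y i).castSucc := by
  rw [isLinearPlacement_snoc_iff]
  simp only [IsLinearPlacement, Set.mem_range, succAbove_ne, exists_false, not_false_eq_true,
    true_and, not_exists]
  constructor
  · rintro ⟨⟨hinj, hadj⟩, hc⟩
    have hc' i : c ≠ (y i).castSucc := mt (val_succAbove_eq_val_add_one_iff c (y i)).2 (hc i)
    exact ⟨⟨hinj.of_comp (f := c.succAbove), fun i j hij h => hadj i j hij
      ((val_succAbove_eq_val_succAbove_add_one_iff c _ _).2 ⟨h, hc' i⟩)⟩,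
      fun i h => hc' i h.symm⟩
  · rintro ⟨⟨hinj, hadj⟩, hc⟩
    exact ⟨⟨succAbove_right_injective.comp hinj, fun i j hij h => hadj i j hij
      ((val_succAbove_eq_val_succAbove_add_one_iff c _ _).1 h).1⟩,
      fun i h => hc i ((val_succAbove_eq_val_add_one_iff c _).1 h).symm⟩

theorem card_isLinearPlacement_succ_succ (n m : ℕ) :
    Nat.card {g : Fin (n + 1) → Fin (m + 1) // IsLinearPlacement g} =
      Nat.card {y : Fin n → Fin m // IsLinearPlacement y} * (m + 1 - n) := by
  let extend (p : Σ y : {y : Fin n → Fin m // IsLinearPlacement y},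
      ↥(Set.range fun i => (y.1 i).castSucc)ᶜ) :
      {g : Fin (n + 1) → Fin (m + 1) // IsLinearPlacement g} :=
    ⟨snoc (fun i => p.2.1.succAbove (p.1.1 i)) p.2.1,
      isLinearPlacement_snoc_succAbove_iff.2 ⟨p.1.2, p.2.2⟩⟩
  have hinj : Injective extend := by
    rintro ⟨⟨y, hy⟩, ⟨c, hc⟩⟩ ⟨⟨y', hy'⟩, ⟨c', hc'⟩⟩ h
    simp only [extend, Subtype.mk.injEq] at h
    obtain ⟨hyy', rfl⟩ := snoc_injective2 h
    obtain rfl : y = y' := funext fun i => succAbove_right_injective (congrFun hyy' i)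
    rfl
  have hsurj : Surjective extend := by
    rintro ⟨g, hg⟩
    obtain ⟨y, hgy⟩ := exists_eq_snoc_succAbove hg.1
    rw [hgy] at hg
    obtain ⟨hy, hc⟩ := isLinearPlacement_snoc_succAbove_iff.1 hg
    exact ⟨⟨⟨y, hy⟩, ⟨_, hc⟩⟩, Subtype.ext hgy.symm⟩
  have hfiber (y : {y : Fin n → Fin m // IsLinearPlacement y}) :
      Nat.card ↥(Set.range fun i => (y.1 i).castSucc)ᶜ = m + 1 - n := by
    rw [Nat.card_compl_range_of_injective (f := fun i => (y.1 i).castSucc)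
      ((castSucc_injective m).comp y.2.1)]
    simp
  have := Fintype.ofFinite {y : Fin n → Fin m // IsLinearPlacement y}
  rw [← Nat.card_eq_of_bijective extend ⟨hinj, hsurj⟩, Nat.card_sigma]
  simp only [hfiber, Finset.sum_const, Finset.card_univ, smul_eq_mul, Nat.card_eq_fintype_card]

theorem card_isLinearPlacement (n m : ℕ) :
    Nat.card {f : Fin n → Fin m // IsLinearPlacement f} = (m + 1 - n) ^ n := by
  induction n generalizing m with
  | zero =>
    rw [pow_zero, Nat.card_eq_one_iff_unique]
    exact ⟨inferInstance, ⟨⟨finZeroElim, finZeroElim, finZeroElim⟩⟩⟩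
  | succ n ih =>
    cases m with
    | zero => simp
    | succ m =>
      rw [card_isLinearPlacement_succ_succ, ih, ← pow_succ, Nat.add_sub_add_right]

end LinearPlacement

def quotAddConstEquivEqZero {ι G : Type*} [AddGroup G] {P : (ι → G) → Prop}
    (hP : ∀ f c, P f → P fun i => f i + c) (i₀ : ι) :
    Quot (fun f g : Subtype P => ∃ c, ∀ i, g.1 i = f.1 i + c) ≃
      {f : Subtype P // f.1 i₀ = 0} where
  toFun := Quot.lift
    (fun f => ⟨⟨fun i => f.1 i - f.1 i₀,
      by simpa only [sub_eq_add_neg] using hP _ (-f.1 i₀) f.2⟩, sub_self _⟩)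
    (by
      rintro f g ⟨c, hc⟩
      simp only [hc, add_sub_add_right_eq_sub])
  invFun f := Quot.mk _ f.1
  left_inv := Quot.ind fun f => Quot.sound ⟨f.1 i₀, fun i => (sub_add_cancel _ _).symm⟩
  right_inv f := by simp only [f.2, sub_zero]

section Normalization

variable {k m : ℕ}

/-- The boxes `1, …, m` of the circle `ZMod (m + 2)`, i.e. all boxes except box `0` and the box
`-1` just anticlockwise of it. -/
def innerBox (m : ℕ) (b : Fin m) : ZMod (m + 2) := ((b : ℕ) + 1 : ℕ)

theorem innerBox_add_one (b : Fin m) : innerBox m b + 1 = ((b + 2 : ℕ) : ZMod (m + 2)) := by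
  simp only [innerBox]; push_cast; ring

theorem innerBox_injective : Injective (innerBox m) := fun a b h => by
  rw [innerBox, innerBox, ZMod.natCast_inj_of_lt (by omega) (by omega)] at h
  omega

theorem innerBox_ne_zero (b : Fin m) : innerBox m b ≠ 0 := by
  rw [innerBox, ← Nat.cast_zero, Ne, ZMod.natCast_inj_of_lt (by omega) (by omega)]
  omega

theorem zero_ne_innerBox_add_one (b : Fin m) : 0 ≠ innerBox m b + 1 := by
  rw [innerBox_add_one, ← Nat.cast_zero, Ne, ZMod.natCast_inj_of_lt (by omega) (by omega)]
  omega

theorem innerBox_eq_innerBox_add_one_iff (a b : Fin m) :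
    innerBox m a = innerBox m b + 1 ↔ (a : ℕ) = b + 1 := by
  rw [innerBox_add_one, innerBox, ZMod.natCast_inj_of_lt (by omega) (by omega)]
  omega

theorem mem_range_innerBox {x : ZMod (m + 2)} (h₀ : x ≠ 0) (h₁ : 0 ≠ x + 1) :
    x ∈ Set.range (innerBox m) := by
  have hpos : x.val ≠ 0 := (ZMod.val_ne_zero x).2 h₀
  have hlt : x.val ≠ m + 1 := fun h => h₁ <| by
    rw [← ZMod.natCast_zmod_val x, h, ← Nat.cast_succ]
    exact (ZMod.natCast_self (m + 2)).symm
  refine ⟨⟨x.val - 1, by have := ZMod.val_lt x; omega⟩, ?_⟩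
  rw [innerBox, Nat.sub_add_cancel (by omega), ZMod.natCast_zmod_val]

theorem isCircularPlacement_cons_zero_innerBox_iff {y : Fin k → Fin m}
    {f : Fin (k + 1) → ZMod (m + 2)} (hf : f = Fin.cons 0 fun i => innerBox m (y i)) :
    (Injective f ∧ ∀ i j, i < j → f i ≠ f j + 1) ↔ IsLinearPlacement y := by
  subst hf
  rw [Fin.cons_injective_iff,
    Fin.forall_lt_cons_iff (r := fun a b : ZMod (m + 2) => a ≠ b + 1)]
  simp only [IsLinearPlacement, Set.mem_range, innerBox_ne_zero, exists_false, not_false_eq_true,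
    true_and, zero_ne_innerBox_add_one, implies_true, ne_eq, innerBox_eq_innerBox_add_one_iff]
  exact and_congr_left' (innerBox_injective.of_comp_iff y)

theorem card_circularPlacement_normalized (k m : ℕ) :
    Nat.card {f : CircularPlacement (k + 1) (m + 2) // f.1 0 = 0} =
      Nat.card {y : Fin k → Fin m // IsLinearPlacement y} := by
  refine (Nat.card_eq_of_bijective
    (fun y => ⟨⟨Fin.cons 0 fun i => innerBox m (y.1 i),
      (isCircularPlacement_cons_zero_innerBox_iff rfl).2 y.2⟩, rfl⟩) ⟨?_, ?_⟩).symm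
  · rintro ⟨y, hy⟩ ⟨y', hy'⟩ h
    have h' : (fun i => innerBox m (y i)) = fun i => innerBox m (y' i) :=
      Fin.cons_right_injective (α := fun _ => ZMod (m + 2)) 0 (congrArg (fun f => f.1.1) h)
    exact Subtype.ext (funext fun i => innerBox_injective (congrFun h' i))
  · rintro ⟨⟨f, hf⟩, h0 : f 0 = 0⟩
    have hrange (i : Fin k) : f i.succ ∈ Set.range (innerBox m) := by
      refine mem_range_innerBox (h0 ▸ hf.1.ne (Fin.succ_ne_zero i)) ?_
      simpa [h0] using hf.2 0 i.succ (Fin.succ_pos i)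
    choose y hy using hrange
    have hfy : f = Fin.cons 0 fun i => innerBox m (y i) := by
      funext i
      induction i using Fin.cases with
      | zero => exact h0
      | succ i => exact (hy i).symm
    exact ⟨⟨y, (isCircularPlacement_cons_zero_innerBox_iff hfy).1 hf⟩,
      Subtype.ext (Subtype.ext hfy.symm)⟩

end Normalization

/-- Since the boxes are unlabeled, two placements differing by a rotation of the circle are
identified. The number of placements up to rotation is `(q-n)^(n-1)`. -/
theorem circular_placement_count (n q : ℕ) (hqn : n < q) :
    Nat.card (Quot (fun f g : CircularPlacement n q =>
      ∃ c : ZMod q, ∀ i : Fin n, g.1 i = f.1 i + c)) = (q - n) ^ (n - 1) := by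
  rcases n with _ | k
  · have : Subsingleton (CircularPlacement 0 q) :=
      ⟨fun f g => Subtype.ext (Subsingleton.elim _ _)⟩
    exact Nat.card_eq_one_iff_unique.2
      ⟨inferInstance, ⟨Quot.mk _ ⟨finZeroElim, finZeroElim, finZeroElim⟩⟩⟩
  obtain ⟨m, rfl⟩ : ∃ m, q = m + 2 := ⟨q - 2, by omega⟩
  have hrotate (f : Fin (k + 1) → ZMod (m + 2)) (c : ZMod (m + 2))
      (hf : Injective f ∧ ∀ i j, i < j → f i ≠ f j + 1) :
      Injective (fun i => f i + c) ∧ ∀ i j, i < j → f i + c ≠ f j + c + 1 :=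
    ⟨(add_left_injective c).comp hf.1, fun i j hij h => hf.2 i j hij (by linear_combination h)⟩
  refine (Nat.card_congr (quotAddConstEquivEqZero hrotate 0)).trans ?_
  refine (card_circularPlacement_normalized k m).trans ?_
  rw [card_isLinearPlacement]
  congr 1
  omega
end

section
/- The number of nonnesting set partitions of {1,...,n} equals the Catalan number C_n = binomial(2n,n)/(n+1). -/
/-!
Call `i` a closer of a partition of `Fin n` if it is not the least element of its block, and an
opener if it is not the greatest. Sending each closer to its predecessor in its block is a
bijection from the closers `C` onto the openers `O`, and the partition is nonnesting exactly when
this bijection is increasing. A nonnesting partition is therefore determined by `(O, C)`, and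
conversely, for any pair with `#O = #C` satisfying the ballot condition
`#{c ∈ C | c ≤ i} ≤ #{o ∈ O | o < i}`, the increasing matching of `C` with `O` is the arc diagram
of a nonnesting partition. Encoding each `i` by the two steps `if i ∈ C then D else U` and
`if i ∈ O then U else D` turns ballot pairs into the Dyck words of semilength `n`, which are
counted by the Catalan numbers.
-/

/-- `i` and `j` lie in the same block of the set partition `π`. -/
def SameBlock {n : ℕ} (π : Finpartition (Finset.univ : Finset (Fin n)))
    (i j : Fin n) : Prop :=
  ∃ b ∈ π.parts, i ∈ b ∧ j ∈ b

/-- There is an arc from `i` to `j` in the arc diagram of `π`: `i < j`, they are in the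
same block, and no element strictly between them lies in that block. -/
def Arc {n : ℕ} (π : Finpartition (Finset.univ : Finset (Fin n)))
    (i j : Fin n) : Prop :=
  i < j ∧ SameBlock π i j ∧ ∀ m : Fin n, i < m → m < j → ¬ SameBlock π i m

/-- A set partition is nonnesting if no arc from `i` to `l` nests over an arc from `j`
to `k` with `i < j < k < l`. -/
def Nonnesting {n : ℕ} (π : Finpartition (Finset.univ : Finset (Fin n))) : Prop :=
  ¬ ∃ i j k l : Fin n, i < j ∧ j < k ∧ k < l ∧ Arc π i l ∧ Arc π j k

open Finset

section LinearOrder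

variable {α β : Type*} [LinearOrder α] [LinearOrder β]

theorem Finset.eqOn_of_strictMonoOn {s : Finset α} {t : Finset β} (hst : #t = #s)
    {f g : α → β} (hf : StrictMonoOn f s) (hg : StrictMonoOn g s)
    (hft : Set.MapsTo f s t) (hgt : Set.MapsTo g s t) : Set.EqOn f g s := by
  have key : ∀ h : α → β, StrictMonoOn h s → Set.MapsTo h s t →
      h ∘ s.orderEmbOfFin rfl = t.orderEmbOfFin hst := fun h hmono hmaps =>
    orderEmbOfFin_unique hst (fun r => hmaps (orderEmbOfFin_mem s rfl r))
      fun a b hab => hmono (orderEmbOfFin_mem s rfl a) (orderEmbOfFin_mem s rfl b)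
        ((s.orderEmbOfFin rfl).strictMono hab)
  intro x hx
  obtain ⟨r, rfl⟩ : x ∈ Set.range (s.orderEmbOfFin rfl) := by
    rwa [range_orderEmbOfFin]
  exact congrFun ((key f hf hft).trans (key g hg hgt).symm) r

theorem Finset.lt_self_of_card_filter_le {s t : Finset α} {g : α → α} (hg : MonotoneOn g s)
    (hst : Set.SurjOn g s t) {x : α} (hx : x ∈ s)
    (hcard : #{y ∈ s | y ≤ x} ≤ #{z ∈ t | z < x}) : g x < x := by
  by_contra! hxg
  have hsub : {z ∈ t | z < x} ⊆ image g {y ∈ s | y < x} := by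
    intro z hz
    rw [mem_filter] at hz
    obtain ⟨y, hy, rfl⟩ := hst hz.1
    refine mem_image_of_mem g (mem_filter.2 ⟨hy, ?_⟩)
    by_contra! hxy
    exact (hz.2.trans_le hxg).not_ge (hg hx hy hxy)
  have hlt : #{y ∈ s | y < x} < #{y ∈ s | y ≤ x} := by
    refine card_lt_card ((ssubset_iff_of_subset ?_).2 ⟨x, by simp [hx], by simp⟩)
    exact monotone_filter_right s fun _ _ => le_of_lt
  have := (card_le_card hsub).trans card_image_le
  omega

end LinearOrder

theorem Finpartition.ext_part {α : Type*} [DecidableEq α] {s : Finset α} {P Q : Finpartition s}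
    (h : ∀ a, P.part a = Q.part a) : P = Q := by
  have hparts : ∀ R : Finpartition s, ∀ b, b ∈ R.parts ↔ ∃ a ∈ s, R.part a = b :=
    fun R b => ⟨fun hb => R.part_surjOn hb, fun ⟨a, ha, hab⟩ => hab ▸ R.part_mem.2 ha⟩
  ext b
  simp only [hparts, h]

section SameBlock

variable {n : ℕ} {π π' : Finpartition (univ : Finset (Fin n))} {i j k : Fin n}

theorem sameBlock_iff_mem_part : SameBlock π i j ↔ j ∈ π.part i := by
  simp only [SameBlock, Finpartition.mem_part_iff_exists, and_comm]

theorem sameBlock_iff_part_eq : SameBlock π i j ↔ π.part i = π.part j := by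
  rw [sameBlock_iff_mem_part, π.mem_part_iff_part_eq_part (mem_univ j) (mem_univ i), eq_comm]

theorem SameBlock.rfl : SameBlock π i i :=
  sameBlock_iff_part_eq.2 (Eq.refl _)

theorem SameBlock.symm (h : SameBlock π i j) : SameBlock π j i :=
  sameBlock_iff_part_eq.2 (sameBlock_iff_part_eq.1 h).symm

theorem sameBlock_comm : SameBlock π i j ↔ SameBlock π j i :=
  ⟨SameBlock.symm, SameBlock.symm⟩

theorem SameBlock.trans (h : SameBlock π i j) (h' : SameBlock π j k) : SameBlock π i k :=
  sameBlock_iff_part_eq.2 ((sameBlock_iff_part_eq.1 h).trans (sameBlock_iff_part_eq.1 h'))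

theorem Finpartition.eq_of_sameBlock_iff (h : ∀ i j, SameBlock π i j ↔ SameBlock π' i j) :
    π = π' :=
  Finpartition.ext_part fun i => by ext j; rw [← sameBlock_iff_mem_part, h, sameBlock_iff_mem_part]

end SameBlock

namespace Finpartition

variable {n : ℕ} {π π' : Finpartition (univ : Finset (Fin n))} {i j : Fin n}

/-- `i` is the right end of an arc. -/
def IsCloser (π : Finpartition (univ : Finset (Fin n))) (i : Fin n) : Prop :=
  ∃ j < i, SameBlock π j i

/-- `i` is the left end of an arc. -/
def IsOpener (π : Finpartition (univ : Finset (Fin n))) (i : Fin n) : Prop :=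
  ∃ j, i < j ∧ SameBlock π i j

open Classical in
/-- The predecessor of `i` in its block, with junk value `i` when `i` is not a closer. -/
noncomputable def blockPred (π : Finpartition (univ : Finset (Fin n))) (i : Fin n) : Fin n :=
  if h : π.IsCloser i then
    ({j | j < i ∧ SameBlock π j i} : Finset (Fin n)).max' (h.imp fun _ hj => by simpa using hj)
  else i

theorem blockPred_lt_and_sameBlock (h : π.IsCloser i) :
    π.blockPred i < i ∧ SameBlock π (π.blockPred i) i := by
  classical
  rw [blockPred, dif_pos h]
  simpa using max'_mem ({j | j < i ∧ SameBlock π j i} : Finset (Fin n)) _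

theorem blockPred_lt (h : π.IsCloser i) : π.blockPred i < i :=
  (blockPred_lt_and_sameBlock h).1

theorem sameBlock_blockPred (h : π.IsCloser i) : SameBlock π (π.blockPred i) i :=
  (blockPred_lt_and_sameBlock h).2

theorem le_blockPred (hji : j < i) (h : SameBlock π j i) : j ≤ π.blockPred i := by
  classical
  rw [blockPred, dif_pos ⟨j, hji, h⟩]
  exact le_max' _ _ (by simp [hji, h])

theorem arc_iff : Arc π i j ↔ π.IsCloser j ∧ π.blockPred j = i := by
  constructor
  · rintro ⟨hij, hs, hgap⟩
    have hc : π.IsCloser j := ⟨i, hij, hs⟩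
    refine ⟨hc, (le_blockPred hij hs).eq_or_lt.elim Eq.symm fun hlt => ?_⟩
    exact absurd (hs.trans (sameBlock_blockPred hc).symm) (hgap _ hlt (blockPred_lt hc))
  · rintro ⟨hc, rfl⟩
    refine ⟨blockPred_lt hc, sameBlock_blockPred hc, fun m hm hmj hs => ?_⟩
    exact (le_blockPred hmj (hs.symm.trans (sameBlock_blockPred hc))).not_gt hm

theorem exists_arc_of_isOpener (h : π.IsOpener i) : ∃ j, Arc π i j := by
  classical
  let later : Finset (Fin n) := {j | i < j ∧ SameBlock π i j}
  have hne : later.Nonempty := h.imp fun _ hj => by simpa [later] using hj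
  obtain ⟨hlt, hs⟩ : i < later.min' hne ∧ SameBlock π i (later.min' hne) := by
    simpa [later] using min'_mem later hne
  refine ⟨later.min' hne, hlt, hs, fun m him hm hsm => ?_⟩
  exact (min'_le later m (by simp [later, him, hsm])).not_gt hm

theorem isOpener_iff_exists_blockPred_eq :
    π.IsOpener i ↔ ∃ j, π.IsCloser j ∧ π.blockPred j = i := by
  simp only [← arc_iff]
  exact ⟨exists_arc_of_isOpener, fun ⟨j, hij, hs, _⟩ => ⟨j, hij, hs⟩⟩

theorem sameBlock_iff_of_lt (hij : i < j) :
    SameBlock π i j ↔ π.IsCloser j ∧ i ≤ π.blockPred j ∧ SameBlock π i (π.blockPred j) := by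
  refine ⟨fun h => ?_, fun ⟨hc, _, hs⟩ => hs.trans (sameBlock_blockPred hc)⟩
  have hc : π.IsCloser j := ⟨i, hij, h⟩
  exact ⟨hc, le_blockPred hij h, h.trans (sameBlock_blockPred hc).symm⟩

theorem eq_of_blockPred_eq (hC : ∀ i, π.IsCloser i ↔ π'.IsCloser i)
    (hpred : ∀ i, π.IsCloser i → π.blockPred i = π'.blockPred i) : π = π' := by
  have key : ∀ j i, i ≤ j → (SameBlock π i j ↔ SameBlock π' i j) := by
    intro j
    induction j using WellFoundedLT.induction with
    | _ j ih =>
      intro i hij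
      rcases hij.eq_or_lt with rfl | hlt
      · exact iff_of_true SameBlock.rfl SameBlock.rfl
      rw [sameBlock_iff_of_lt hlt, sameBlock_iff_of_lt hlt, ← hC j]
      refine and_congr_right fun hc => ?_
      rw [← hpred j hc]
      exact and_congr_right (ih _ (blockPred_lt hc) i)
  refine eq_of_sameBlock_iff fun i j => ?_
  rcases le_total i j with h | h
  · exact key j i h
  · rw [sameBlock_comm, key i j h, sameBlock_comm]

open Classical in
noncomputable def closers (π : Finpartition (univ : Finset (Fin n))) : Finset (Fin n) :=
  {i | π.IsCloser i}

open Classical in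
noncomputable def openers (π : Finpartition (univ : Finset (Fin n))) : Finset (Fin n) :=
  {i | π.IsOpener i}

@[simp]
theorem mem_closers : i ∈ π.closers ↔ π.IsCloser i := by
  simp [closers]

@[simp]
theorem mem_openers : i ∈ π.openers ↔ π.IsOpener i := by
  simp [openers]

theorem mapsTo_blockPred : Set.MapsTo π.blockPred π.closers π.openers := fun i hi => by
  simp only [mem_coe, mem_closers, mem_openers] at hi ⊢
  exact isOpener_iff_exists_blockPred_eq.2 ⟨i, hi, rfl⟩

theorem surjOn_blockPred : Set.SurjOn π.blockPred π.closers π.openers := fun i hi => by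
  simpa [isOpener_iff_exists_blockPred_eq] using hi

theorem injOn_blockPred : Set.InjOn π.blockPred π.closers := by
  intro x hx y hy hxy
  simp only [mem_coe, mem_closers] at hx hy
  have hs : SameBlock π x y :=
    (sameBlock_blockPred hx).symm.trans (hxy ▸ sameBlock_blockPred hy)
  by_contra hne
  rcases lt_or_gt_of_ne hne with hlt | hlt
  · exact (le_blockPred hlt hs).not_gt (hxy ▸ blockPred_lt hx)
  · exact (le_blockPred hlt hs.symm).not_gt (hxy ▸ blockPred_lt hy)

theorem card_openers_eq_card_closers : #π.openers = #π.closers :=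
  (card_nbij π.blockPred mapsTo_blockPred injOn_blockPred surjOn_blockPred).symm

theorem card_closers_le_card_openers (i : Fin n) :
    #{c ∈ π.closers | c ≤ i} ≤ #{o ∈ π.openers | o < i} := by
  refine card_le_card_of_injOn π.blockPred (fun c hc => ?_) (injOn_blockPred.mono ?_)
  · simp only [coe_filter, Set.mem_ofPred_eq, mem_closers, mem_openers] at hc ⊢
    exact ⟨isOpener_iff_exists_blockPred_eq.2 ⟨c, hc.1, rfl⟩, (blockPred_lt hc.1).trans_le hc.2⟩
  · exact coe_subset.2 (filter_subset _ _)

theorem nonnesting_iff_strictMonoOn : Nonnesting π ↔ StrictMonoOn π.blockPred π.closers := by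
  constructor
  · intro hnn x hx y hy hxy
    simp only [mem_coe, mem_closers] at hx hy
    rcases lt_trichotomy (π.blockPred x) (π.blockPred y) with hlt | heq | hgt
    · exact hlt
    · exact absurd (injOn_blockPred (by simpa) (by simpa) heq) hxy.ne
    · exact absurd ⟨_, _, x, y, hgt, blockPred_lt hx, hxy, arc_iff.2 ⟨hy, rfl⟩,
        arc_iff.2 ⟨hx, rfl⟩⟩ hnn
  · rintro hmono ⟨i, j, k, l, hij, -, hkl, hil, hjk⟩
    obtain ⟨hl, rfl⟩ := arc_iff.1 hil
    obtain ⟨hk, rfl⟩ := arc_iff.1 hjk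
    exact (hmono (by simpa) (by simpa) hkl).not_gt hij

theorem eq_of_openers_eq_of_closers_eq (hπ : Nonnesting π) (hπ' : Nonnesting π')
    (hO : π.openers = π'.openers) (hC : π.closers = π'.closers) : π = π' := by
  have hC' : ∀ i, π.IsCloser i ↔ π'.IsCloser i := fun i => by
    rw [← mem_closers, hC, mem_closers]
  refine eq_of_blockPred_eq hC' fun i hi => ?_
  refine eqOn_of_strictMonoOn card_openers_eq_card_closers (nonnesting_iff_strictMonoOn.1 hπ)
    ?_ mapsTo_blockPred ?_ (by simpa using hi)
  · rw [hC]; exact nonnesting_iff_strictMonoOn.1 hπ'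
  · rw [hC, hO]; exact mapsTo_blockPred

end Finpartition

/-- The condition on the openers `O` and closers `C` of an arc diagram: every closer needs its own
earlier opener. -/
structure IsBallotPair {n : ℕ} (O C : Finset (Fin n)) : Prop where
  card_closers_le (i : Fin n) : #{c ∈ C | c ≤ i} ≤ #{o ∈ O | o < i}
  card_eq : #O = #C

namespace Finpartition

variable {n : ℕ} {x y : Fin n}

theorem isBallotPair (π : Finpartition (univ : Finset (Fin n))) :
    IsBallotPair π.openers π.closers :=
  ⟨card_closers_le_card_openers, card_openers_eq_card_closers⟩

def chainBottom (g : Fin n → Fin n) (x : Fin n) : Fin n :=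
  if g x < x then chainBottom g (g x) else x
termination_by x

variable (g : Fin n → Fin n)

theorem chainBottom_of_lt (h : g x < x) : chainBottom g x = chainBottom g (g x) := by
  rw [chainBottom, if_pos h]

theorem chainBottom_of_not_lt (h : ¬ g x < x) : chainBottom g x = x := by
  rw [chainBottom, if_neg h]

theorem chainBottom_le (x : Fin n) : chainBottom g x ≤ x := by
  induction x using WellFoundedLT.induction with
  | _ x ih =>
    by_cases h : g x < x
    · rw [chainBottom_of_lt g h]; exact (ih _ h).trans h.le
    · rw [chainBottom_of_not_lt g h]

theorem lt_of_chainBottom_lt (h : chainBottom g x < x) : g x < x := by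
  by_contra h'
  exact h.ne (chainBottom_of_not_lt g h')

instance : DecidableRel (Setoid.ker (chainBottom g)) := fun a b =>
  inferInstanceAs (Decidable (chainBottom g a = chainBottom g b))

/-- For `g` increasing on `{x | g x < x}`, the partition whose arcs are the `g x → x` with
`g x < x`. -/
def ofBlockPred : Finpartition (univ : Finset (Fin n)) :=
  ofSetoid (Setoid.ker (chainBottom g))

variable {g}

theorem sameBlock_ofBlockPred : SameBlock (ofBlockPred g) x y ↔ chainBottom g x = chainBottom g y := by
  rw [sameBlock_iff_mem_part, ofBlockPred, mem_part_ofSetoid_iff_rel]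
  rfl

theorem isCloser_ofBlockPred : (ofBlockPred g).IsCloser x ↔ g x < x := by
  refine ⟨fun ⟨j, hjx, hs⟩ => lt_of_chainBottom_lt g ?_, fun h => ⟨g x, h, ?_⟩⟩
  · exact (sameBlock_ofBlockPred.1 hs ▸ chainBottom_le g j).trans_lt hjx
  · exact sameBlock_ofBlockPred.2 (chainBottom_of_lt g h).symm

variable (hg : StrictMonoOn g {x | g x < x})
include hg

theorem le_of_chainBottom_eq (hy : g y < y) (hxy : x < y)
    (h : chainBottom g x = chainBottom g y) : x ≤ g y := by
  induction y using WellFoundedLT.induction generalizing x with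
  | _ y ih =>
    by_contra! hgy
    have hx : g x < x := lt_of_chainBottom_lt g <|
      (h.trans (chainBottom_of_lt g hy) ▸ chainBottom_le g (g y)).trans_lt hgy
    have := ih x hxy hx hgy ((chainBottom_of_lt g hy).symm.trans h.symm)
    exact (hg hx hy hxy).not_ge this

theorem blockPred_ofBlockPred (h : g x < x) : (ofBlockPred g).blockPred x = g x := by
  have hc : (ofBlockPred g).IsCloser x := isCloser_ofBlockPred.2 h
  refine le_antisymm ?_ (le_blockPred h (sameBlock_ofBlockPred.2 (chainBottom_of_lt g h).symm))
  exact le_of_chainBottom_eq hg h (blockPred_lt hc)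
    (sameBlock_ofBlockPred.1 (sameBlock_blockPred hc))

theorem nonnesting_ofBlockPred : Nonnesting (ofBlockPred g) := by
  have hC : ((ofBlockPred g).closers : Set (Fin n)) = {x | g x < x} := by
    ext; simp [isCloser_ofBlockPred]
  rw [nonnesting_iff_strictMonoOn, hC]
  exact hg.congr fun x hx => (blockPred_ofBlockPred hg hx).symm

theorem isOpener_ofBlockPred : (ofBlockPred g).IsOpener y ↔ ∃ x, g x < x ∧ g x = y := by
  rw [isOpener_iff_exists_blockPred_eq]
  refine exists_congr fun x => ?_
  rw [isCloser_ofBlockPred]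
  exact and_congr_right fun h => by rw [blockPred_ofBlockPred hg h]

end Finpartition

namespace IsBallotPair

variable {n : ℕ} {O C : Finset (Fin n)}

theorem exists_matching (hb : IsBallotPair O C) :
    ∃ g : Fin n → Fin n, StrictMonoOn g C ∧ Set.BijOn g C O ∧ ∀ x, g x < x ↔ x ∈ C := by
  let e : C ≃o O := (C.orderIsoOfFin rfl).symm.trans (O.orderIsoOfFin hb.card_eq)
  let g : Fin n → Fin n := fun x => if hx : x ∈ C then e ⟨x, hx⟩ else x
  have hge : ∀ x (hx : x ∈ C), g x = e ⟨x, hx⟩ := fun x hx => dif_pos hx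
  have hmono : StrictMonoOn g C := fun x hx y hy hxy => by
    rw [hge x hx, hge y hy]
    exact e.strictMono hxy
  have hmaps : Set.MapsTo g C O := fun x hx => by
    rw [hge x hx]
    exact (e _).2
  have hsurj : Set.SurjOn g C O := fun o ho =>
    ⟨e.symm ⟨o, ho⟩, (e.symm _).2, by rw [hge _ (e.symm _).2]; simp⟩
  refine ⟨g, hmono, ⟨hmaps, hmono.injOn, hsurj⟩, fun x => ⟨fun h => ?_, fun hx => ?_⟩⟩
  · by_contra hx
    simp [g, hx] at h
  · exact lt_self_of_card_filter_le hmono.monotoneOn hsurj hx (hb.card_closers_le x)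

theorem exists_nonnesting (hb : IsBallotPair O C) :
    ∃ π : Finpartition (univ : Finset (Fin n)), Nonnesting π ∧ π.openers = O ∧ π.closers = C := by
  obtain ⟨g, hmono, hbij, hlt⟩ := hb.exists_matching
  have hg : StrictMonoOn g {x | g x < x} := by
    rwa [show {x | g x < x} = (C : Set (Fin n)) from Set.ext hlt]
  refine ⟨Finpartition.ofBlockPred g, Finpartition.nonnesting_ofBlockPred hg, ?_, ?_⟩
  · ext o
    simp only [Finpartition.mem_openers, Finpartition.isOpener_ofBlockPred hg, hlt]
    exact ⟨fun ⟨x, hx, hxo⟩ => hxo ▸ hbij.mapsTo hx, fun ho => hbij.surjOn ho⟩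
  · ext x
    rw [Finpartition.mem_closers, Finpartition.isCloser_ofBlockPred, hlt]

end IsBallotPair

noncomputable def nonnestingEquivBallotPairs (n : ℕ) :
    {π : Finpartition (univ : Finset (Fin n)) // Nonnesting π} ≃
      {p : Finset (Fin n) × Finset (Fin n) // IsBallotPair p.1 p.2} :=
  Equiv.ofBijective (fun π => ⟨(π.1.openers, π.1.closers), π.1.isBallotPair⟩) <| by
    refine ⟨fun π π' h => ?_, fun ⟨⟨O, C⟩, hb⟩ => ?_⟩
    · simp only [Subtype.mk.injEq, Prod.mk.injEq] at h
      exact Subtype.ext (Finpartition.eq_of_openers_eq_of_closers_eq π.2 π'.2 h.1 h.2)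
    · obtain ⟨π, hπ, hO, hC⟩ := hb.exists_nonnesting
      exact ⟨⟨π, hπ⟩, by simp [hO, hC]⟩

open DyckStep

theorem List.count_U_add_count_D (l : List DyckStep) : l.count U + l.count D = l.length := by
  induction l with
  | nil => rfl
  | cons s l ih => cases s <;> simp <;> omega

theorem List.count_D_le_count_U_iff (l : List DyckStep) :
    l.count D ≤ l.count U ↔ l.length ≤ 2 * l.count U := by
  have := l.count_U_add_count_D
  omega

section BallotWord

variable {n : ℕ}

def countBelow (s : Finset (Fin n)) (m : ℕ) : ℕ :=
  #{x ∈ s | x.val < m}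

theorem countBelow_zero (s : Finset (Fin n)) : countBelow s 0 = 0 := by
  simp [countBelow]

theorem countBelow_succ (s : Finset (Fin n)) {i : ℕ} (hi : i < n) :
    countBelow s (i + 1) = countBelow s i + if ⟨i, hi⟩ ∈ s then 1 else 0 := by
  have hsplit : ({x ∈ s | x.val < i + 1} : Finset (Fin n))
      = {x ∈ s | x.val < i} ∪ {x ∈ s | x = ⟨i, hi⟩} := by
    ext x
    simp only [mem_union, mem_filter, Fin.ext_iff, ← and_or_left, Nat.lt_succ_iff_lt_or_eq]
  rw [countBelow, countBelow, hsplit, card_union_of_disjoint, filter_eq']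
  · split_ifs <;> simp
  · exact disjoint_filter.2 fun x _ hx hxi => hx.ne (congrArg Fin.val hxi)

theorem countBelow_mono (s : Finset (Fin n)) {m m' : ℕ} (h : m ≤ m') :
    countBelow s m ≤ countBelow s m' :=
  card_le_card (monotone_filter_right s fun _ _ hx => hx.trans_le h)

theorem countBelow_of_le (s : Finset (Fin n)) {m : ℕ} (h : n ≤ m) : countBelow s m = #s := by
  rw [countBelow, filter_true_of_mem fun x _ => x.2.trans_le h]

theorem isBallotPair_iff_countBelow {O C : Finset (Fin n)} :
    IsBallotPair O C ↔
      (∀ i < n, countBelow C (i + 1) ≤ countBelow O i) ∧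
        countBelow O n = countBelow C n := by
  have hle : ∀ s : Finset (Fin n), ∀ i : Fin n, #{x ∈ s | x ≤ i} = countBelow s (i + 1) :=
    fun s i => by simp only [countBelow, Fin.le_def, Nat.lt_succ_iff]
  have hlt : ∀ s : Finset (Fin n), ∀ i : Fin n, #{x ∈ s | x < i} = countBelow s i :=
    fun s i => by simp only [countBelow, Fin.lt_def]
  rw [countBelow_of_le _ le_rfl, countBelow_of_le _ le_rfl]
  exact ⟨fun ⟨h, h'⟩ => ⟨fun i hi => by simpa [hle, hlt] using h ⟨i, hi⟩, h'⟩,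
    fun ⟨h, h'⟩ => ⟨fun i => by simpa [hle, hlt] using h i i.2, h'⟩⟩

variable (O C : Finset (Fin n))

/-- After the first `2 i` steps the height is twice the number of arcs from an element `< i` to
an element `≥ i`. -/
def ballotWord : List DyckStep :=
  List.ofFn fun j : Fin (2 * n) =>
    let i : Fin n := ⟨j / 2, by omega⟩
    if (j : ℕ) % 2 = 0 then (if i ∈ C then D else U) else (if i ∈ O then U else D)

@[simp]
theorem length_ballotWord : (ballotWord O C).length = 2 * n :=
  List.length_ofFn

theorem getElem?_ballotWord_two_mul {i : ℕ} (hi : i < n) :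
    (ballotWord O C)[2 * i]? = some (if ⟨i, hi⟩ ∈ C then D else U) := by
  simp [ballotWord, show 2 * i < 2 * n by omega]

theorem getElem?_ballotWord_two_mul_add_one {i : ℕ} (hi : i < n) :
    (ballotWord O C)[2 * i + 1]? = some (if ⟨i, hi⟩ ∈ O then U else D) := by
  simp [ballotWord, show 2 * i + 1 < 2 * n by omega,
    show (2 * i + 1) / 2 = i by omega]

theorem count_U_take_ballotWord_two_mul_add_one {i : ℕ} (hi : i < n) :
    ((ballotWord O C).take (2 * i + 1)).count U
      = ((ballotWord O C).take (2 * i)).count U + if ⟨i, hi⟩ ∈ C then 0 else 1 := by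
  rw [List.take_add_one, getElem?_ballotWord_two_mul O C hi]
  split_ifs <;> simp

theorem count_U_take_ballotWord_two_mul {i : ℕ} (hi : i ≤ n) :
    ((ballotWord O C).take (2 * i)).count U + countBelow C i = i + countBelow O i := by
  induction i with
  | zero => simp [countBelow_zero]
  | succ i ih =>
    have hi' : i < n := hi
    rw [show 2 * (i + 1) = 2 * i + 1 + 1 by ring, List.take_add_one,
      getElem?_ballotWord_two_mul_add_one O C hi', List.count_append,
      count_U_take_ballotWord_two_mul_add_one O C hi', countBelow_succ C hi',
      countBelow_succ O hi']
    have := ih hi'.le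
    split_ifs <;> simp <;> omega

theorem count_U_ballotWord_add_countBelow :
    (ballotWord O C).count U + #C = n + #O := by
  have h := count_U_take_ballotWord_two_mul O C le_rfl
  rwa [List.take_of_length_le (by simp), countBelow_of_le _ le_rfl,
    countBelow_of_le _ le_rfl] at h

variable {O C}

theorem IsBallotPair.count_U_ballotWord (hb : IsBallotPair O C) :
    (ballotWord O C).count U = n := by
  have := count_U_ballotWord_add_countBelow O C
  have := hb.card_eq
  omega

theorem IsBallotPair.count_U_eq_count_D_ballotWord (hb : IsBallotPair O C) :
    (ballotWord O C).count U = (ballotWord O C).count D := by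
  have := (ballotWord O C).count_U_add_count_D
  have := hb.count_U_ballotWord
  simp only [length_ballotWord] at *
  omega

theorem IsBallotPair.count_D_le_count_U_take_ballotWord (hb : IsBallotPair O C) (m : ℕ) :
    ((ballotWord O C).take m).count D ≤ ((ballotWord O C).take m).count U := by
  obtain ⟨hstep, -⟩ := isBallotPair_iff_countBelow.1 hb
  rw [List.count_D_le_count_U_iff, List.length_take, length_ballotWord]
  obtain ⟨i, rfl | rfl⟩ : ∃ i, m = 2 * i ∨ m = 2 * i + 1 := ⟨m / 2, by omega⟩
  · rcases le_or_gt n i with hni | hin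
    · rw [List.take_of_length_le (by simp; omega), hb.count_U_ballotWord]
      omega
    · have := count_U_take_ballotWord_two_mul O C hin.le
      rcases i with _ | i
      · simp
      · have := hstep i (by omega)
        have := countBelow_mono O (Nat.le_add_right i 1)
        omega
  · rcases le_or_gt n i with hni | hin
    · rw [List.take_of_length_le (by simp; omega), hb.count_U_ballotWord]
      omega
    · have := count_U_take_ballotWord_two_mul O C hin.le
      have := count_U_take_ballotWord_two_mul_add_one O C hin
      have := hstep i hin
      rw [countBelow_succ C hin] at this
      split_ifs at * <;> omega

theorem isBallotPair_of_dyckWord (p : DyckWord) (hp : p.toList = ballotWord O C) :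
    IsBallotPair O C := by
  refine isBallotPair_iff_countBelow.2 ⟨fun i hi => ?_, ?_⟩
  · have hpre := (List.count_D_le_count_U_iff _).1 (hp ▸ p.count_D_le_count_U (2 * i + 1))
    rw [List.length_take, length_ballotWord] at hpre
    have := count_U_take_ballotWord_two_mul O C hi.le
    have := count_U_take_ballotWord_two_mul_add_one O C hi
    rw [countBelow_succ C hi]
    split_ifs at * <;> omega
  · have := count_U_ballotWord_add_countBelow O C
    have := (ballotWord O C).count_U_add_count_D
    have := hp ▸ p.count_U_eq_count_D
    rw [countBelow_of_le _ le_rfl, countBelow_of_le _ le_rfl]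
    simp only [length_ballotWord] at *
    omega

variable (n) in
def ballotPairOfWord (w : List DyckStep) : Finset (Fin n) × Finset (Fin n) :=
  (univ.filter fun i : Fin n => w[2 * i.val + 1]? = some U,
    univ.filter fun i : Fin n => w[2 * i.val]? = some D)

theorem ballotPairOfWord_ballotWord (O C : Finset (Fin n)) :
    ballotPairOfWord n (ballotWord O C) = (O, C) := by
  ext i
  · simp only [ballotPairOfWord, mem_filter, mem_univ, true_and,
      getElem?_ballotWord_two_mul_add_one O C i.2]
    split_ifs with h <;> simp [h]
  · simp only [ballotPairOfWord, mem_filter, mem_univ, true_and,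
      getElem?_ballotWord_two_mul O C i.2]
    split_ifs with h <;> simp [h]

theorem ballotWord_ballotPairOfWord {w : List DyckStep} (hw : w.length = 2 * n) :
    ballotWord (ballotPairOfWord n w).1 (ballotPairOfWord n w).2 = w := by
  refine List.ext_getElem? fun j => ?_
  obtain ⟨i, rfl | rfl⟩ : ∃ i, j = 2 * i ∨ j = 2 * i + 1 := ⟨j / 2, by omega⟩
  all_goals
    rcases lt_or_ge i n with hi | hi
    swap
    · rw [List.getElem?_eq_none (by simp; omega), List.getElem?_eq_none (by omega)]
  · rw [getElem?_ballotWord_two_mul _ _ hi, List.getElem?_eq_getElem (by omega)]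
    rcases (w[2 * i]'(by omega)).dichotomy with h | h <;>
      simp [ballotPairOfWord, List.getElem?_eq_getElem (show 2 * i < w.length by omega), h]
  · rw [getElem?_ballotWord_two_mul_add_one _ _ hi, List.getElem?_eq_getElem (by omega)]
    rcases (w[2 * i + 1]'(by omega)).dichotomy with h | h <;>
      simp [ballotPairOfWord, List.getElem?_eq_getElem (show 2 * i + 1 < w.length by omega), h]

variable (n) in
def ballotPairsEquivDyckWords :
    {p : Finset (Fin n) × Finset (Fin n) // IsBallotPair p.1 p.2} ≃
      {w : DyckWord // w.semilength = n} where
  toFun p := ⟨⟨ballotWord p.1.1 p.1.2, p.2.count_U_eq_count_D_ballotWord,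
    p.2.count_D_le_count_U_take_ballotWord⟩, p.2.count_U_ballotWord⟩
  invFun w := ⟨ballotPairOfWord n w.1.toList, isBallotPair_of_dyckWord w.1
    (ballotWord_ballotPairOfWord (by rw [← w.1.two_mul_semilength_eq_length, w.2])).symm⟩
  left_inv p := Subtype.ext (ballotPairOfWord_ballotWord p.1.1 p.1.2)
  right_inv w := Subtype.ext <| DyckWord.ext <|
    ballotWord_ballotPairOfWord (by rw [← w.1.two_mul_semilength_eq_length, w.2])

end BallotWord

/-- The number of nonnesting set partitions of `{1,...,n}` is the Catalan number `C n`. -/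
theorem nonnesting_count (n : ℕ) :
    Nat.card {π : Finpartition (Finset.univ : Finset (Fin n)) // Nonnesting π}
      = catalan n := by
  rw [Nat.card_congr ((nonnestingEquivBallotPairs n).trans (ballotPairsEquivDyckWords n)),
    Nat.card_eq_fintype_card, DyckWord.card_dyckWord_semilength_eq_catalan]
end

section
/- The number of noncrossing set partitions of {1,...,n} equals the Catalan number C_n = binomial(2n,n)/(n+1). -/
/-- A set partition is nonnesting if no arc from `i` to `k` crosses an arc from `j`
to `l` with `i < j < k < l`. -/
def Noncrossing {n : ℕ} (π : Finpartition (Finset.univ : Finset (Fin n))) : Prop :=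
  ¬ ∃ i j k l : Fin n, i < j ∧ j < k ∧ k < l ∧ Arc π i k ∧ Arc π j l

open Finset

def IsNoncrossing {α : Type*} [LT α] (r : α → α → Prop) : Prop :=
  ∀ ⦃a b c d⦄, a < b → b < c → c < d → r a c → r b d → r a b

theorem IsNoncrossing.comap {α β : Type*} [Preorder α] [Preorder β] {r : α → α → Prop}
    (hr : IsNoncrossing r) {f : β → α} (hf : StrictMono f) :
    IsNoncrossing fun a b => r (f a) (f b) :=
  fun _ _ _ _ hab hbc hcd => hr (hf hab) (hf hbc) (hf hcd)

instance {α : Type*} [Finite α] : Finite (Setoid α) :=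
  Finite.of_injective (fun s : Setoid α => s.r) fun _ _ h =>
    Setoid.ext fun a b => iff_of_eq (congrFun (congrFun h a) b)

namespace Finpartition

variable {α : Type*} [Fintype α] [DecidableEq α]

theorem eq_of_part_eq {P Q : Finpartition (univ : Finset α)} (h : ∀ a, P.part a = Q.part a) :
    P = Q := by
  have parts_eq (R : Finpartition (univ : Finset α)) : R.parts = univ.image R.part := by
    ext t
    refine ⟨fun ht => ?_, fun ht => ?_⟩
    · obtain ⟨a, ha⟩ := R.nonempty_of_mem_parts ht
      exact mem_image.2 ⟨a, mem_univ a, R.part_eq_of_mem ht ha⟩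
    · obtain ⟨a, -, rfl⟩ := mem_image.1 ht
      exact R.part_mem.2 (mem_univ a)
  ext1
  rw [parts_eq, parts_eq, funext h]

noncomputable def equivSetoid : Finpartition (univ : Finset α) ≃ Setoid α where
  toFun P := Setoid.ker P.part
  invFun s := by classical exact ofSetoid s
  left_inv P := eq_of_part_eq fun a => by
    classical
    ext b
    rw [mem_part_ofSetoid_iff_rel, Setoid.ker_def, eq_comm,
      P.mem_part_iff_part_eq_part (mem_univ b) (mem_univ a)]
  right_inv s := Setoid.ext fun a b => by
    classical
    rw [Setoid.ker_def, eq_comm, ← mem_part_iff_part_eq_part _ (mem_univ b) (mem_univ a),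
      mem_part_ofSetoid_iff_rel]

end Finpartition

section Partition

variable {n : ℕ}

theorem sameBlock_iff {π : Finpartition (univ : Finset (Fin n))} {i j : Fin n} :
    SameBlock π i j ↔ Finpartition.equivSetoid π i j := by
  rw [SameBlock, ← Finpartition.mem_part_iff_exists, Finpartition.equivSetoid, Equiv.coe_fn_mk,
    Setoid.ker_def, π.mem_part_iff_part_eq_part (mem_univ i) (mem_univ j)]

theorem exists_arc_of_sameBlock {π : Finpartition (univ : Finset (Fin n))} {x y z : Fin n}
    (hxy : SameBlock π x y) (hxz : x < z) (hzy : z < y) (hz : ¬ SameBlock π x z) :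
    ∃ u v, SameBlock π x u ∧ x ≤ u ∧ u < z ∧ z < v ∧ v ≤ y ∧ Arc π u v := by
  classical
  set s := Finpartition.equivSetoid π
  simp only [Arc, sameBlock_iff] at *
  let below := univ.filter fun w => s x w ∧ w < z
  let above := univ.filter fun w => s x w ∧ z < w
  have hx : x ∈ below := by simp [below, hxz]
  have hy : y ∈ above := by simp [above, hxy, hzy]
  obtain ⟨hxu, huz⟩ := (mem_filter.1 (below.max'_mem ⟨x, hx⟩)).2
  obtain ⟨hxv, hzv⟩ := (mem_filter.1 (above.min'_mem ⟨y, hy⟩)).2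
  refine ⟨below.max' ⟨x, hx⟩, above.min' ⟨y, hy⟩, hxu, below.le_max' x hx, huz, hzv,
    above.min'_le y hy, huz.trans hzv, s.trans (s.symm hxu) hxv, fun m hum hmv hm => ?_⟩
  have hxm := s.trans hxu hm
  rcases lt_trichotomy m z with hmz | rfl | hzm
  · exact hum.not_ge (below.le_max' m (by simp [below, hxm, hmz]))
  · exact hz hxm
  · exact hmv.not_ge (above.min'_le m (by simp [above, hxm, hzm]))

theorem noncrossing_iff_isNoncrossing (π : Finpartition (univ : Finset (Fin n))) :
    Noncrossing π ↔ IsNoncrossing (Finpartition.equivSetoid π) := by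
  set s := Finpartition.equivSetoid π
  constructor
  · intro h a b c d hab hbc hcd hac hbd
    by_contra hab'
    rw [← sameBlock_iff] at hac hbd hab'
    -- The arc of the block of `a` over `b` ends at some `v ≤ c`; the arc of the block of `b`
    -- over `v` crosses it.
    obtain ⟨u, v, hau, -, hub, hbv, hvc, huv⟩ := exists_arc_of_sameBlock hac hab hbc hab'
    have hav : s a v := s.trans (sameBlock_iff.1 hau) (sameBlock_iff.1 huv.2.1)
    have hbv' : ¬ SameBlock π b v := fun hbv' =>
      hab' (sameBlock_iff.2 (s.trans hav (s.symm (sameBlock_iff.1 hbv'))))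
    obtain ⟨p, q, -, hbp, hpv, hvq, -, hpq⟩ :=
      exists_arc_of_sameBlock hbd hbv (hvc.trans_lt hcd) hbv'
    exact h ⟨u, p, v, q, hub.trans_le hbp, hpv, hvq, huv, hpq⟩
  · rintro h ⟨i, j, k, l, hij, hjk, hkl, hik, hjl⟩
    exact hik.2.2 j hij hjk (sameBlock_iff.2 (h hij hjk hkl (sameBlock_iff.1 hik.2.1)
      (sameBlock_iff.1 hjl.2.1)))

end Partition

section NatRel

variable {m : ℕ}

/-- `r` read on natural-number indices, so that relations on `Fin k`, `Fin (n - k)` and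
`Fin (n + 1)` can be compared without casts between the index types. -/
def NatRel (r : Fin m → Fin m → Prop) (a b : ℕ) : Prop :=
  ∃ (ha : a < m) (hb : b < m), r ⟨a, ha⟩ ⟨b, hb⟩

variable {r : Fin m → Fin m → Prop} {s : Setoid (Fin m)} {a b c : ℕ}

@[simp]
theorem natRel_val {i j : Fin m} : NatRel r i j ↔ r i j :=
  ⟨fun ⟨_, _, h⟩ => h, fun h => ⟨i.isLt, j.isLt, h⟩⟩

theorem NatRel.lt_left (h : NatRel r a b) : a < m := h.1

theorem NatRel.lt_right (h : NatRel r a b) : b < m := h.2.1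

theorem natRel_self (ha : a < m) : NatRel s a a := ⟨ha, ha, s.refl _⟩

theorem NatRel.symm (h : NatRel s a b) : NatRel s b a :=
  let ⟨ha, hb, h⟩ := h; ⟨hb, ha, s.symm h⟩

theorem NatRel.trans (hab : NatRel s a b) (hbc : NatRel s b c) : NatRel s a c :=
  let ⟨ha, _, hab⟩ := hab; let ⟨_, hc, hbc⟩ := hbc; ⟨ha, hc, s.trans hab hbc⟩

theorem IsNoncrossing.natRel (hr : IsNoncrossing r) : IsNoncrossing (NatRel r) :=
  fun _ _ _ _ hab hbc hcd ⟨ha, _, hac⟩ ⟨hb, _, hbd⟩ => ⟨ha, hb, hr hab hbc hcd hac hbd⟩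

end NatRel

section Glue

/-- The blocks of `R₁` shifted to `{1, …, k}`, those of `R₂` shifted to `{k + 1, …, n}`, and `0`
added to the block of `k + 1`: as `0 - (k + 1) = 0` in `ℕ`, the last clause reads `0` as `k + 1`. -/
def GlueRel (k : ℕ) (R₁ R₂ : ℕ → ℕ → Prop) (a b : ℕ) : Prop :=
  a = 0 ∧ b = 0 ∨ 0 < a ∧ 0 < b ∧ R₁ (a - 1) (b - 1) ∨
    (a = 0 ∨ k < a) ∧ (b = 0 ∨ k < b) ∧ R₂ (a - (k + 1)) (b - (k + 1))

variable {n k : ℕ} {σ : Setoid (Fin k)} {τ : Setoid (Fin (n - k))} {a b c : ℕ}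

theorem glueRel_self (hk : k ≤ n) (ha : a ≤ n) : GlueRel k (NatRel σ) (NatRel τ) a a := by
  rcases Nat.eq_zero_or_pos a with rfl | ha₀
  · exact .inl ⟨rfl, rfl⟩
  rcases le_or_gt a k with hak | hka
  · exact .inr <| .inl ⟨ha₀, ha₀, natRel_self (by omega)⟩
  · exact .inr <| .inr ⟨.inr hka, .inr hka, natRel_self (by omega)⟩

theorem GlueRel.symm (h : GlueRel k (NatRel σ) (NatRel τ) a b) :
    GlueRel k (NatRel σ) (NatRel τ) b a := by
  rcases h with ⟨ha, hb⟩ | ⟨ha, hb, h⟩ | ⟨ha, hb, h⟩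
  · exact .inl ⟨hb, ha⟩
  · exact .inr <| .inl ⟨hb, ha, h.symm⟩
  · exact .inr <| .inr ⟨hb, ha, h.symm⟩

theorem GlueRel.trans (hab : GlueRel k (NatRel σ) (NatRel τ) a b)
    (hbc : GlueRel k (NatRel σ) (NatRel τ) b c) : GlueRel k (NatRel σ) (NatRel τ) a c := by
  rcases hab with ⟨rfl, rfl⟩ | ⟨ha, hb, hab⟩ | ⟨ha, hb, hab⟩
  · exact hbc
  · rcases hbc with ⟨rfl, -⟩ | ⟨-, hc, hbc⟩ | ⟨hb', -, -⟩
    · exact absurd hb (lt_irrefl 0)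
    · exact .inr <| .inl ⟨ha, hc, hab.trans hbc⟩
    · have := hab.lt_right; omega
  · rcases hbc with ⟨rfl, rfl⟩ | ⟨hb', -, hbc⟩ | ⟨-, hc, hbc⟩
    · exact .inr <| .inr ⟨ha, .inl rfl, hab⟩
    · have := hbc.lt_left; omega
    · exact .inr <| .inr ⟨ha, hc, hab.trans hbc⟩

theorem isNoncrossing_glueRel (hσ : IsNoncrossing σ) (hτ : IsNoncrossing τ) :
    IsNoncrossing (GlueRel k (NatRel σ) (NatRel τ)) := by
  intro a b c d hab hbc hcd hac hbd
  rcases hac with ⟨-, rfl⟩ | ⟨ha, -, hac⟩ | ⟨ha, hc, hac⟩ <;>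
    rcases hbd with ⟨rfl, -⟩ | ⟨hb, hd, hbd⟩ | ⟨hb, hd, hbd⟩
  all_goals try omega
  · exact .inr <| .inl ⟨ha, hb, hσ.natRel (by omega) (by omega) (by omega) hac hbd⟩
  · have := hac.lt_right; omega
  · have := hbd.lt_right; omega
  · refine .inr <| .inr ⟨ha, hb, ?_⟩
    rcases (Nat.sub_le_sub_right hab.le (k + 1)).eq_or_lt with hab' | hab'
    · rw [hab']; exact natRel_self hbd.lt_left
    · exact hτ.natRel hab' (by omega) (by omega) hac hbd

end Glue

section Split

variable {n : ℕ} {k : Fin (n + 1)}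

def innerPos (k : Fin (n + 1)) (i : Fin k) : Fin (n + 1) := ⟨i + 1, by omega⟩

def outerPos (k : Fin (n + 1)) (i : Fin (n - k)) : Fin (n + 1) := ⟨i + (k + 1), by omega⟩

theorem innerPos_strictMono : StrictMono (innerPos k) := fun i j h => by
  simp only [innerPos, Fin.mk_lt_mk]; omega

theorem outerPos_strictMono : StrictMono (outerPos k) := fun i j h => by
  simp only [outerPos, Fin.mk_lt_mk]; omega

theorem natRel_comap_innerPos {s : Setoid (Fin (n + 1))} {x y : ℕ} :
    NatRel (s.comap (innerPos k)) x y ↔ x < k ∧ y < k ∧ NatRel s (x + 1) (y + 1) :=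
  ⟨fun ⟨hx, hy, h⟩ => ⟨hx, hy, by omega, by omega, h⟩, fun ⟨hx, hy, _, _, h⟩ => ⟨hx, hy, h⟩⟩

theorem natRel_comap_outerPos {s : Setoid (Fin (n + 1))} {x y : ℕ} :
    NatRel (s.comap (outerPos k)) x y ↔ NatRel s (x + (k + 1)) (y + (k + 1)) :=
  ⟨fun ⟨_, _, h⟩ => ⟨by omega, by omega, h⟩, fun ⟨_, _, h⟩ => ⟨by omega, by omega, h⟩⟩

def glue (k : Fin (n + 1)) (σ : Setoid (Fin k)) (τ : Setoid (Fin (n - k))) :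
    Setoid (Fin (n + 1)) where
  r a b := GlueRel k (NatRel σ) (NatRel τ) a b
  iseqv := ⟨fun a => glueRel_self (Nat.lt_succ_iff.1 k.isLt) (Nat.lt_succ_iff.1 a.isLt),
    .symm, .trans⟩

variable {σ : Setoid (Fin k)} {τ : Setoid (Fin (n - k))}

theorem isNoncrossing_glue (hσ : IsNoncrossing σ) (hτ : IsNoncrossing τ) :
    IsNoncrossing (glue k σ τ) :=
  (isNoncrossing_glueRel hσ hτ).comap Fin.val_strictMono

theorem comap_innerPos_glue : (glue k σ τ).comap (innerPos k) = σ := by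
  refine Setoid.ext fun i j => ?_
  rw [Setoid.comap_rel, ← natRel_val (r := σ)]
  change GlueRel k (NatRel σ) (NatRel τ) (i + 1) (j + 1) ↔ _
  refine ⟨?_, fun h => .inr <| .inl ⟨i.1.succ_pos, j.1.succ_pos, h⟩⟩
  rintro (⟨h, -⟩ | ⟨-, -, h⟩ | ⟨h | h, -⟩)
  · omega
  · exact h
  · omega
  · omega

theorem comap_outerPos_glue : (glue k σ τ).comap (outerPos k) = τ := by
  refine Setoid.ext fun i j => ?_
  rw [Setoid.comap_rel, ← natRel_val (r := τ)]
  change GlueRel k (NatRel σ) (NatRel τ) (i + (k + 1)) (j + (k + 1)) ↔ _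
  refine ⟨?_, fun h => .inr <| .inr ⟨.inr (by omega), .inr (by omega), by simpa using h⟩⟩
  rintro (⟨h, -⟩ | ⟨-, -, h⟩ | ⟨-, -, h⟩)
  · omega
  · have := h.lt_left; omega
  · simpa using h

end Split

section SplitIndex

variable {n : ℕ} {s : Setoid (Fin (n + 1))}

open scoped Classical in
noncomputable def splitIndex (s : Setoid (Fin (n + 1))) : Fin (n + 1) :=
  ⟨Nat.find (⟨n, .inl rfl⟩ : ∃ k, k = n ∨ NatRel s 0 (k + 1)),
    Nat.lt_succ_of_le (Nat.find_min' _ (.inl rfl))⟩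

theorem natRel_zero_splitIndex_succ (h : (splitIndex s : ℕ) < n) :
    NatRel s 0 (splitIndex s + 1) := by
  classical
  exact (Nat.find_spec (⟨n, .inl rfl⟩ : ∃ k, k = n ∨ NatRel s 0 (k + 1))).resolve_left h.ne

theorem not_natRel_zero_of_le_splitIndex {a : ℕ} (ha : 0 < a) (hak : a ≤ splitIndex s) :
    ¬ NatRel s 0 a := by
  classical
  intro h
  have := Nat.find_min (⟨n, .inl rfl⟩ : ∃ k, k = n ∨ NatRel s 0 (k + 1))
    (m := a - 1) (by simp only [splitIndex] at hak; omega)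
  exact this (.inr (by rwa [Nat.sub_add_cancel ha]))

theorem pos_and_le_splitIndex_of_natRel (hs : IsNoncrossing s) {a b : ℕ} (h : NatRel s a b)
    (ha : 0 < a) (hak : a ≤ splitIndex s) : 0 < b ∧ b ≤ splitIndex s := by
  have h0a := not_natRel_zero_of_le_splitIndex ha hak
  refine ⟨Nat.pos_of_ne_zero fun hb => h0a (hb ▸ h.symm), le_of_not_gt fun hkb => h0a ?_⟩
  have hk := natRel_zero_splitIndex_succ (s := s) (by have := h.lt_right; omega)
  rcases (Nat.succ_le_of_lt hkb).eq_or_lt with rfl | hkb'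
  · exact hk.trans h.symm
  · exact hs.natRel ha (by omega) hkb' hk h

variable {k : Fin (n + 1)} {σ : Setoid (Fin k)} {τ : Setoid (Fin (n - k))}

theorem splitIndex_glue : splitIndex (glue k σ τ) = k := by
  classical
  refine Fin.ext ((Nat.find_eq_iff _).2 ⟨?_, fun m hm => ?_⟩)
  · rcases (Nat.lt_succ_iff.1 k.isLt).eq_or_lt with hk | hk
    · exact .inl hk
    · refine .inr ⟨by omega, by omega, ?_⟩
      change GlueRel k (NatRel σ) (NatRel τ) 0 (k + 1)
      refine .inr <| .inr ⟨.inl rfl, .inr k.1.lt_succ_self, ?_⟩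
      rw [Nat.zero_sub, Nat.sub_self]
      exact natRel_self (by omega)
  · rintro (hm | ⟨_, _, h⟩)
    · omega
    · change GlueRel k (NatRel σ) (NatRel τ) 0 (m + 1) at h
      rcases h with ⟨-, h⟩ | ⟨h, -⟩ | ⟨-, h | h, -⟩ <;> omega

theorem glueRel_comap_splitIndex (hs : IsNoncrossing s) {x y : ℕ} :
    GlueRel (splitIndex s) (NatRel (s.comap (innerPos (splitIndex s))))
      (NatRel (s.comap (outerPos (splitIndex s)))) x y ↔ NatRel s x y := by
  set k := splitIndex s
  have hrep {x : ℕ} (hx : x = 0 ∨ k < x) (hxn : x - (k + 1) + (k + 1) < n + 1) :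
      NatRel s x (x - (k + 1) + (k + 1)) := by
    rcases hx with rfl | hx
    · simpa using natRel_zero_splitIndex_succ (s := s) (by omega)
    · rw [Nat.sub_add_cancel hx]; exact natRel_self (by omega)
  simp only [GlueRel, natRel_comap_innerPos, natRel_comap_outerPos]
  constructor
  · rintro (⟨rfl, rfl⟩ | ⟨hx, hy, -, -, h⟩ | ⟨hx, hy, h⟩)
    · exact natRel_self n.succ_pos
    · rwa [Nat.sub_add_cancel hx, Nat.sub_add_cancel hy] at h
    · exact (hrep hx h.lt_left).trans (h.trans (hrep hy h.lt_right).symm)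
  · intro h
    by_cases hx : 0 < x ∧ x ≤ k
    · obtain ⟨hy, hyk⟩ := pos_and_le_splitIndex_of_natRel hs h hx.1 hx.2
      refine .inr <| .inl ⟨hx.1, hy, by omega, by omega, ?_⟩
      rwa [Nat.sub_add_cancel hx.1, Nat.sub_add_cancel hy]
    by_cases hy : 0 < y ∧ y ≤ k
    · exact absurd (pos_and_le_splitIndex_of_natRel hs h.symm hy.1 hy.2) hx
    by_cases h₀ : x = 0 ∧ y = 0
    · exact .inl h₀
    have hx' : x = 0 ∨ k < x := by omega
    have hy' : y = 0 ∨ k < y := by omega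
    have := h.lt_left
    have := h.lt_right
    exact .inr <| .inr ⟨hx', hy', (hrep hx' (by omega)).symm.trans (h.trans (hrep hy' (by omega)))⟩

theorem glue_splitIndex (hs : IsNoncrossing s) :
    glue (splitIndex s) (s.comap (innerPos _)) (s.comap (outerPos _)) = s :=
  Setoid.ext fun _ _ => (glueRel_comap_splitIndex hs).trans natRel_val

end SplitIndex

abbrev NoncrossingSetoid (n : ℕ) := {s : Setoid (Fin n) // IsNoncrossing s}

noncomputable def splitEquiv {n : ℕ} (k : Fin (n + 1)) :
    {s : NoncrossingSetoid (n + 1) // splitIndex s.1 = k} ≃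
      NoncrossingSetoid k × NoncrossingSetoid (n - k) where
  toFun s := (⟨s.1.1.comap (innerPos k), s.1.2.comap innerPos_strictMono⟩,
    ⟨s.1.1.comap (outerPos k), s.1.2.comap outerPos_strictMono⟩)
  invFun p := ⟨⟨glue k p.1.1 p.2.1, isNoncrossing_glue p.1.2 p.2.2⟩, splitIndex_glue⟩
  left_inv := by
    rintro ⟨⟨s, hs⟩, rfl⟩
    exact Subtype.ext (Subtype.ext (glue_splitIndex hs))
  right_inv p := Prod.ext (Subtype.ext comap_innerPos_glue) (Subtype.ext comap_outerPos_glue)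

theorem card_noncrossingSetoid (n : ℕ) : Nat.card (NoncrossingSetoid n) = catalan n := by
  induction n using Nat.strong_induction_on with
  | _ n ih =>
  rcases n with _ | n
  · rw [catalan_zero, Nat.card_eq_one_iff_unique]
    exact ⟨⟨fun _ _ => Subtype.ext (Setoid.ext fun a => a.elim0)⟩, ⟨⟨⊥, fun a => a.elim0⟩⟩⟩
  calc Nat.card (NoncrossingSetoid (n + 1))
      = Nat.card (Σ k, {s : NoncrossingSetoid (n + 1) // splitIndex s.1 = k}) :=
        Nat.card_congr (Equiv.sigmaFiberEquiv _).symm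
    _ = ∑ k : Fin (n + 1),
          Nat.card (NoncrossingSetoid k) * Nat.card (NoncrossingSetoid (n - k)) := by
        rw [Nat.card_sigma]
        simp only [Nat.card_congr (splitEquiv _), Nat.card_prod]
    _ = catalan (n + 1) := by
        rw [catalan_succ]
        exact Finset.sum_congr rfl fun k _ => by rw [ih k (by omega), ih (n - k) (by omega)]

/-- The number of noncrossing set partitions of `{1,...,n}` is the Catalan number `C n`. -/
theorem noncrossing_count (n : ℕ) :
    Nat.card {π : Finpartition (Finset.univ : Finset (Fin n)) // Noncrossing π}
      = catalan n := by
  rw [← card_noncrossingSetoid n]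
  exact Nat.card_congr
    (Finpartition.equivSetoid.subtypeEquiv fun π => noncrossing_iff_isNoncrossing π)
end

section
/- The number of parking functions of length n is (n+1)^{n-1}. -/
/-- `p` is a parking function of length `n` (written with `0`-indexed entries): some
rearrangement of `p` is nondecreasing with `i`-th smallest value at most `i`
(`0`-indexed; this is the condition `b_i ≤ i - 1` for `1`-indexed tuples). -/
def IsParkingFunction (n : ℕ) (p : Fin n → ℕ) : Prop :=
  ∃ σ : Equiv.Perm (Fin n), Monotone (p ∘ σ) ∧ ∀ i : Fin n, p (σ i) ≤ (i : ℕ)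

/-!
Pollak's circle argument. Let `ℤ/(n+1)` act on `(ℤ/(n+1))^n` by adding the same constant to
every entry; the orbits have size `n + 1`. For `f` in `(ℤ/(n+1))^n`, the walk
`m ↦ #{i | f i ∈ {0, …, m-1} mod (n+1)} - m` drops by exactly `1` over each period `n + 1`, so by
the cycle lemma exactly one start `s < n + 1` keeps the walk at or above its starting value for a
whole period. Shifting `f` by `-s` turns this into the criterion "at least `m` entries are `< m`
for every `m ≤ n`", which characterises parking functions. So each orbit contains exactly one
parking function, and there are `(n + 1)^n / (n + 1)` of them.
-/

open Finset

theorem existsUnique_lt_forall_le_add {N : ℕ} {S : ℕ → ℤ} (hS : ∀ m, S (m + N) = S m - 1) :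
    ∃! s, s < N ∧ ∀ m < N, S s ≤ S (s + m) := by
  have hN : (range N).Nonempty := nonempty_range_iff.mpr fun h => by
    have := hS 0
    rw [h, add_zero] at this
    omega
  -- `s` is the first minimiser of `S` on `[0, N)`, so `S s < S t` for every `t < s`
  obtain ⟨s, hs, hmin⟩ := exists_min_image (range N) (fun t => toLex (S t, t)) hN
  simp only [mem_range, Prod.Lex.toLex_le_toLex] at hs hmin
  refine ⟨s, ⟨hs, fun m hm => ?_⟩, fun s' ⟨hs', h'⟩ => ?_⟩
  · rcases lt_or_ge (s + m) N with hlt | hge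
    · rcases hmin _ hlt with h | h <;> omega
    · obtain ⟨t, ht⟩ : ∃ t, s + m = t + N := ⟨s + m - N, by omega⟩
      rw [ht, hS]
      rcases hmin t (by omega) with h | h <;> omega
  · rcases lt_trichotomy s' s with hlt | heq | hgt
    · have := h' (s - s') (by omega)
      rw [Nat.add_sub_cancel' hlt.le] at this
      rcases hmin s' hs' with h | h <;> omega
    · exact heq
    · have := h' (s + N - s') (by omega)
      rw [show s' + (s + N - s') = s + N by omega, hS] at this
      rcases hmin s' hs' with h | h <;> omega

theorem AddAction.nat_card_subtype_mul_nat_card_eq {G X : Type*} [AddGroup G] [AddAction G X]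
    {P : X → Prop} (h : ∀ x, ∃! c : G, P (c +ᵥ x)) :
    Nat.card {x // P x} * Nat.card G = Nat.card X := by
  rw [← Nat.card_prod]
  refine Nat.card_congr (Equiv.ofBijective (fun y : {x // P x} × G => y.2 +ᵥ y.1.1) ⟨?_, ?_⟩)
  · rintro ⟨⟨x₁, hx₁⟩, c₁⟩ ⟨⟨x₂, hx₂⟩, c₂⟩ (hx : c₁ +ᵥ x₁ = c₂ +ᵥ x₂)
    rw [← neg_vadd_vadd c₁ x₁, hx] at hx₁
    rw [← neg_vadd_vadd c₂ x₂] at hx₂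
    obtain rfl : c₁ = c₂ := neg_injective ((h _).unique hx₁ hx₂)
    obtain rfl : x₁ = x₂ := vadd_left_cancel c₁ hx
    rfl
  · intro x
    obtain ⟨c, hc, -⟩ := h x
    exact ⟨(⟨c +ᵥ x, hc⟩, -c), neg_vadd_vadd c x⟩

theorem ZMod.sum_range_natCast_add {N : ℕ} [NeZero N] {M : Type*} [AddCommMonoid M]
    (f : ZMod N → M) (s : ℕ) : ∑ t ∈ range N, f ((s + t : ℕ) : ZMod N) = ∑ z, f z := by
  refine sum_nbij' (fun t => ((s + t : ℕ) : ZMod N)) (fun z => (z - s).val) (by simp)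
    (fun z _ => mem_range.mpr (ZMod.val_lt _)) (fun t ht => ?_) (fun z _ => ?_) (fun _ _ => rfl)
  · simpa using ZMod.val_cast_of_lt (mem_range.mp ht)
  · simp

section Walk

variable {ι : Type*} [Fintype ι] {N : ℕ}

def walk (g : ι → ZMod N) (m : ℕ) : ℤ :=
  ∑ t ∈ range m, ((#{i | g i = t} : ℤ) - 1)

theorem walk_add_modulus [NeZero N] (g : ι → ZMod N) (m : ℕ) :
    walk g (m + N) = walk g m + Fintype.card ι - N := by
  have hfib : ∑ t ∈ range N, (#{i | g i = ((m + t : ℕ) : ZMod N)} : ℤ) = Fintype.card ι := by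
    rw [ZMod.sum_range_natCast_add (fun z => (#{i | g i = z} : ℤ)), ← card_univ]
    exact_mod_cast (card_eq_sum_card_fiberwise (f := g) (t := univ) (by simp)).symm
  rw [walk, walk, sum_range_add, sum_sub_distrib (s := range N), hfib]
  simp only [sum_sub_distrib, sum_const, card_range, Int.nsmul_eq_mul, mul_one]
  ring

theorem walk_sub_natCast (g : ι → ZMod N) (s m : ℕ) :
    walk (fun i => g i - (s : ZMod N)) m = walk g (s + m) - walk g s := by
  simp only [walk, sum_range_add, add_sub_cancel_left, Nat.cast_add, sub_eq_iff_eq_add']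

theorem walk_eq_card_val_lt_sub (g : ι → ZMod N) {m : ℕ} (hm : m ≤ N) :
    walk g m = #{i | (g i).val < m} - m := by
  have hfib := card_eq_sum_card_fiberwise (f := fun i => (g i).val) (s := {i | (g i).val < m})
    (t := range m) (fun i hi => by simpa using hi)
  rw [walk, sum_sub_distrib, hfib]
  push_cast
  refine congr_arg₂ _ (sum_congr rfl fun t ht => ?_) (by simp)
  have ht : t < m := mem_range.mp ht
  have : NeZero N := ⟨by omega⟩
  have hval (z : ZMod N) : z = t ↔ z.val = t := by
    rw [← (ZMod.val_injective N).eq_iff, ZMod.val_cast_of_lt (ht.trans_le hm)]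
  simp only [filter_filter, hval]
  congr 2
  ext i
  simp only [mem_filter, mem_univ, true_and, iff_and_self]
  exact fun h => h ▸ ht

end Walk

section ParkingFunction

variable {n : ℕ}

theorem IsParkingFunction.lt {p : Fin n → ℕ} (hp : IsParkingFunction n p) (i : Fin n) :
    p i < n := by
  obtain ⟨σ, -, hle⟩ := hp
  simpa using (hle (σ.symm i)).trans_lt (σ.symm i).isLt

theorem isParkingFunction_iff_le_card {p : Fin n → ℕ} :
    IsParkingFunction n p ↔ ∀ m ≤ n, m ≤ #{i | p i < m} := by
  have hperm (σ : Equiv.Perm (Fin n)) (m : ℕ) : #{i | p (σ i) < m} = #{i | p i < m} :=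
    card_equiv σ (by simp)
  constructor
  · rintro ⟨σ, -, hle⟩ m hm
    calc m = #{i : Fin n | (i : ℕ) < m} := by rw [Fin.card_filter_val_lt]; omega
      _ ≤ #{i | p (σ i) < m} := card_le_card fun i => by simpa using (hle i).trans_lt
      _ = _ := hperm σ m
  · intro h
    set σ := Tuple.sort p
    refine ⟨σ, Tuple.monotone_sort p, fun i => ?_⟩
    by_contra! hi
    have hsub : ({j | p (σ j) < i + 1} : Finset (Fin n)) ⊆ ({j | (j : ℕ) < i} : Finset (Fin n)) :=
      fun j => by
        simp only [mem_filter, mem_univ, true_and]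
        intro hj
        by_contra! hij
        have : p (σ i) ≤ p (σ j) := Tuple.monotone_sort p (Fin.le_iff_val_le_val.mpr hij)
        omega
    have := (h (i + 1) i.isLt).trans ((hperm σ _).symm.le.trans (card_le_card hsub))
    rw [Fin.card_filter_val_lt] at this
    omega

theorem card_isParkingFunction_eq_card_zmod :
    Nat.card {p : Fin n → ℕ // IsParkingFunction n p} =
      Nat.card {g : Fin n → ZMod (n + 1) // IsParkingFunction n (fun i => (g i).val)} := by
  have hval {p : Fin n → ℕ} (hp : IsParkingFunction n p) :
      (fun i => ((p i : ZMod (n + 1))).val) = p :=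
    funext fun i => ZMod.val_cast_of_lt (Nat.lt_succ_of_lt (hp.lt i))
  exact Nat.card_congr
    { toFun p := ⟨fun i => p.1 i, (hval p.2).symm ▸ p.2⟩
      invFun g := ⟨fun i => (g.1 i).val, g.2⟩
      left_inv p := Subtype.ext (hval p.2)
      right_inv g := Subtype.ext (funext fun i => ZMod.natCast_zmod_val (g.1 i)) }

theorem isParkingFunction_val_iff_walk_nonneg (g : Fin n → ZMod (n + 1)) :
    IsParkingFunction n (fun i => (g i).val) ↔ ∀ m ≤ n, 0 ≤ walk g m := by
  rw [isParkingFunction_iff_le_card]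
  refine forall₂_congr fun m hm => ?_
  rw [walk_eq_card_val_lt_sub g (by omega)]
  omega

theorem existsUnique_vadd_isParkingFunction (f : Fin n → ZMod (n + 1)) :
    ∃! c : ZMod (n + 1), IsParkingFunction n (fun i => ((c +ᵥ f) i).val) := by
  obtain ⟨s, ⟨hs, hgood⟩, huniq⟩ := existsUnique_lt_forall_le_add (S := walk f) fun m => by
    rw [walk_add_modulus, Fintype.card_fin]
    push_cast
    ring
  have key (c : ZMod (n + 1)) : IsParkingFunction n (fun i => ((c +ᵥ f) i).val) ↔
      ∀ m < n + 1, walk f (-c).val ≤ walk f ((-c).val + m) := by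
    have hshift : c +ᵥ f = fun i => f i - ((-c).val : ZMod (n + 1)) := by
      ext i
      simp [sub_eq_add_neg, add_comm]
    rw [hshift, isParkingFunction_val_iff_walk_nonneg]
    simp only [walk_sub_natCast, sub_nonneg, Nat.lt_succ_iff]
  refine ⟨-(s : ZMod (n + 1)), (key _).mpr ?_, fun c hc => ?_⟩
  · rwa [neg_neg, ZMod.val_cast_of_lt hs]
  · rw [← huniq _ ⟨ZMod.val_lt _, (key c).mp hc⟩, ZMod.natCast_zmod_val, neg_neg]

end ParkingFunction

/-- The number of parking functions of length `n` is `(n+1)^(n-1)`. -/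
theorem parking_function_count (n : ℕ) :
    Nat.card {p : Fin n → ℕ // IsParkingFunction n p} = (n + 1) ^ (n - 1) := by
  have h := AddAction.nat_card_subtype_mul_nat_card_eq
    (P := fun g : Fin n → ZMod (n + 1) => IsParkingFunction n (fun i => (g i).val))
    existsUnique_vadd_isParkingFunction
  rw [Nat.card_zmod, Nat.card_fun, Nat.card_zmod, Nat.card_fin,
    ← card_isParkingFunction_eq_card_zmod] at h
  refine Nat.eq_of_mul_eq_mul_right n.succ_pos (h.trans ?_)
  rcases n with _ | n <;> simp [pow_succ]
end

section
/- For fixed m ≥ 1, the number of m-parking functions of length n is (mn+1)^{n-1}. -/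
/-!
Pollak's cyclic argument. Put `N = m * n + 1` and, for `q : Fin n → ZMod N`, consider the walk
`t ↦ m * #{(i, j) | j < t, q i = j} - t`. It drops by exactly `1` over each period `N`, and the
shift `fun i => (q i - r).val` is an `m`-parking function iff the walk never returns below its
value at `r` during the period after `r`. Exactly one `r < N` has this property (the first
minimiser on `[0, N)`), so every `q` has exactly one parking shift, and
`#parking functions * N = N ^ n`.
-/

open Finset

/-- `p` is an `m`-parking function of length `n` (written with `0`-indexed entries): some
rearrangement of `p` is nondecreasing with `i`-th smallest value at most `m * i`
(`0`-indexed; this is the condition `b_i ≤ m(i-1)` for `1`-indexed tuples). -/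
def IsMParkingFunction (m n : ℕ) (p : Fin n → ℕ) : Prop :=
  ∃ σ : Equiv.Perm (Fin n), Monotone (p ∘ σ) ∧ ∀ i : Fin n, p (σ i) ≤ m * (i : ℕ)

theorem existsUnique_lt_forall_le_add_of_add_eq_sub_one {f : ℕ → ℤ} {N : ℕ}
    (hf : ∀ t, f (t + N) = f t - 1) :
    ∃! r, r < N ∧ ∀ u, 0 < u → u < N → f r ≤ f (r + u) := by
  refine existsUnique_of_exists_of_unique ?_ ?_
  · have hN : 0 < N := Nat.pos_of_ne_zero fun h => by subst h; linarith [hf 0]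
    obtain ⟨s, hs, hmin⟩ := exists_min_image (range N) f ⟨0, mem_range.2 hN⟩
    have hex : ∃ r, r < N ∧ f r = f s := ⟨s, mem_range.1 hs, rfl⟩
    obtain ⟨hrN, hr⟩ := Nat.find_spec hex
    refine ⟨Nat.find hex, hrN, fun u hu huN => ?_⟩
    rcases lt_or_ge (Nat.find hex + u) N with h | h
    · rw [hr]; exact hmin _ (mem_range.2 h)
    · set t := Nat.find hex + u - N
      have ht : t < Nat.find hex := by omega
      have hne : f t ≠ f s := fun h' => Nat.find_min hex ht ⟨by omega, h'⟩
      have hge : f s ≤ f t := hmin t (mem_range.2 (by omega))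
      have hdrop := hf t
      rw [show t + N = Nat.find hex + u by omega] at hdrop
      omega
  · suffices ∀ a b, a < N ∧ (∀ u, 0 < u → u < N → f a ≤ f (a + u)) →
        b < N ∧ (∀ u, 0 < u → u < N → f b ≤ f (b + u)) → ¬ a < b by
      intro a b ha hb
      exact le_antisymm (not_lt.1 (this b a hb ha)) (not_lt.1 (this a b ha hb))
    rintro a b ⟨haN, ha⟩ ⟨hbN, hb⟩ hab
    have h1 := ha (b - a) (by omega) (by omega)
    have h2 := hb (a + N - b) (by omega) (by omega)
    rw [show a + (b - a) = b by omega] at h1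
    rw [show b + (a + N - b) = a + N by omega, hf] at h2
    omega

namespace IsMParkingFunction

variable {m n : ℕ} {p : Fin n → ℕ}

theorem lt_mul_add_one (hp : IsMParkingFunction m n p) (i : Fin n) : p i < m * n + 1 := by
  obtain ⟨σ, -, hle⟩ := hp
  have := hle (σ.symm i)
  rw [Equiv.apply_symm_apply] at this
  have := Nat.mul_le_mul_left m (σ.symm i).isLt.le
  omega

theorem val_sub_eq (hp : IsMParkingFunction m n p) {q : Fin n → ZMod (m * n + 1)}
    {c : ZMod (m * n + 1)} (hq : ∀ i, q i = p i + c) : (fun i => (q i - c).val) = p :=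
  funext fun i => by simp [hq, ZMod.val_cast_of_lt (hp.lt_mul_add_one i)]

theorem iff_card_le : IsMParkingFunction m n p ↔ ∀ k < n, k + 1 ≤ #{i | p i ≤ m * k} := by
  constructor
  · rintro ⟨σ, hmono, hle⟩ k hk
    calc k + 1 = #(Iic (⟨k, hk⟩ : Fin n)) := by simp
      _ ≤ #{j | p (σ j) ≤ m * k} := card_le_card fun j hj =>
          mem_filter.2 ⟨mem_univ j, (hmono (mem_Iic.1 hj)).trans (hle ⟨k, hk⟩)⟩
      _ = #{i | p i ≤ m * k} := card_equiv σ (by simp)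
  · intro h
    refine ⟨Tuple.sort p, Tuple.monotone_sort p, fun i => ?_⟩
    by_contra! hi
    have hsub : ({j | p (Tuple.sort p j) ≤ m * i} : Finset (Fin n)) ⊆ Iio i := fun j hj => by
      rw [mem_filter] at hj
      exact mem_Iio.2 (lt_of_not_ge fun hij =>
        (hj.2.trans_lt hi).not_ge (Tuple.monotone_sort p hij))
    have hcard := h i i.isLt
    rw [← card_equiv (Tuple.sort p) (s := {j | p (Tuple.sort p j) ≤ m * i}) (by simp)] at hcard
    have := card_le_card hsub
    rw [Fin.card_Iio] at this
    omega

theorem iff_le_mul_card (hm : 1 ≤ m) :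
    IsMParkingFunction m n p ↔ ∀ t, 0 < t → t ≤ m * n → t ≤ m * #{i | p i < t} := by
  rw [iff_card_le]
  constructor
  · intro h t ht htn
    obtain ⟨k, hkt, htk⟩ : ∃ k, m * k < t ∧ t ≤ m * (k + 1) :=
      ⟨(t - 1) / m, by have := Nat.mul_div_le (t - 1) m; omega,
        by have := Nat.lt_mul_div_succ (t - 1) hm; omega⟩
    have hk : k < n := Nat.lt_of_mul_lt_mul_left (hkt.trans_le htn)
    calc t ≤ m * (k + 1) := htk
      _ ≤ m * #{i | p i ≤ m * k} := Nat.mul_le_mul_left m (h k hk)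
      _ ≤ m * #{i | p i < t} :=
          Nat.mul_le_mul_left m (card_le_card fun i => by
            simp only [mem_filter, mem_univ, true_and]; omega)
  · intro h k hk
    have := h (m * k + 1) (by omega) (by nlinarith)
    simp only [Nat.lt_succ_iff] at this
    nlinarith

end IsMParkingFunction

theorem ZMod.sum_Ico_ite_natCast_eq {N : ℕ} [NeZero N] (x : ZMod N) (r : ℕ) {u : ℕ}
    (hu : u ≤ N) :
    ∑ j ∈ Ico r (r + u), (if x = j then 1 else 0) = if (x - r).val < u then 1 else 0 := by
  have hx : ∀ k < u, x = ((r + k : ℕ) : ZMod N) ↔ (x - r).val = k := fun k hk => by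
    constructor
    · rintro rfl
      simp [ZMod.val_cast_of_lt (hk.trans_le hu)]
    · rintro rfl
      simp
  rw [sum_Ico_eq_sum_range, Nat.add_sub_cancel_left,
    sum_congr rfl fun k hk => if_congr (hx k (mem_range.1 hk)) rfl rfl, sum_ite_eq]
  simp only [mem_range]

theorem ZMod.sum_Ico_card_filter_eq {ι : Type*} {N : ℕ} [NeZero N] (s : Finset ι)
    (q : ι → ZMod N) (r : ℕ) {u : ℕ} (hu : u ≤ N) :
    ∑ j ∈ Ico r (r + u), #{i ∈ s | q i = j} = #{i ∈ s | (q i - r).val < u} := by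
  simp_rw [card_filter]
  rw [sum_comm]
  exact sum_congr rfl fun i _ => ZMod.sum_Ico_ite_natCast_eq (q i) r hu

def parkingWalk {n N : ℕ} (m : ℕ) (q : Fin n → ZMod N) (t : ℕ) : ℤ :=
  ((m * ∑ j ∈ range t, #{i | q i = j} : ℕ) : ℤ) - t

section parkingWalk

variable {m n : ℕ}

theorem parkingWalk_add_sub {N : ℕ} [NeZero N] (q : Fin n → ZMod N) (r : ℕ) {u : ℕ}
    (hu : u ≤ N) :
    parkingWalk m q (r + u) - parkingWalk m q r = m * #{i | (q i - r).val < u} - u := by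
  unfold parkingWalk
  rw [← sum_range_add_sum_Ico _ (Nat.le_add_right r u), ZMod.sum_Ico_card_filter_eq _ _ _ hu]
  push_cast
  ring

theorem parkingWalk_add_modulus (q : Fin n → ZMod (m * n + 1)) (r : ℕ) :
    parkingWalk m q (r + (m * n + 1)) = parkingWalk m q r - 1 := by
  have hall : #{i | (q i - r).val < m * n + 1} = n := by
    rw [filter_true_of_mem fun i _ => ZMod.val_lt _, card_univ, Fintype.card_fin]
  have := parkingWalk_add_sub (m := m) q r le_rfl
  rw [hall] at this
  push_cast at this
  linarith

theorem isMParkingFunction_sub_natCast_iff (hm : 1 ≤ m) (q : Fin n → ZMod (m * n + 1))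
    (r : ℕ) :
    IsMParkingFunction m n (fun i => (q i - r).val) ↔
      ∀ u, 0 < u → u < m * n + 1 → parkingWalk m q r ≤ parkingWalk m q (r + u) := by
  rw [IsMParkingFunction.iff_le_mul_card hm]
  refine forall_congr' fun u => imp_congr_right fun _ => ?_
  rw [Nat.lt_succ_iff]
  refine imp_congr_right fun hu => ?_
  have := parkingWalk_add_sub (m := m) q r (Nat.le_succ_of_le hu)
  constructor <;> intro h
  · have : (u : ℤ) ≤ m * #{i | (q i - r).val < u} := by exact_mod_cast h
    linarith
  · have : (u : ℤ) ≤ m * #{i | (q i - r).val < u} := by linarith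
    exact_mod_cast this

theorem existsUnique_isMParkingFunction_sub (hm : 1 ≤ m) (q : Fin n → ZMod (m * n + 1)) :
    ∃! c : ZMod (m * n + 1), IsMParkingFunction m n (fun i => (q i - c).val) := by
  obtain ⟨r, ⟨-, hr⟩, huniq⟩ :=
    existsUnique_lt_forall_le_add_of_add_eq_sub_one (parkingWalk_add_modulus (m := m) q)
  refine ⟨r, (isMParkingFunction_sub_natCast_iff hm q r).2 hr, fun c hc => ?_⟩
  rw [← ZMod.natCast_zmod_val c, isMParkingFunction_sub_natCast_iff hm] at hc
  rw [← ZMod.natCast_zmod_val c, huniq c.val ⟨c.val_lt, hc⟩]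

theorem bijective_natCast_add (hm : 1 ≤ m) :
    Function.Bijective fun x : {p // IsMParkingFunction m n p} × ZMod (m * n + 1) =>
      fun i => (x.1.1 i : ZMod (m * n + 1)) + x.2 := by
  constructor
  · rintro ⟨⟨p₁, hp₁⟩, c₁⟩ ⟨⟨p₂, hp₂⟩, c₂⟩ h
    have h₁ := hp₁.val_sub_eq (q := fun i => p₁ i + c₁) fun _ => rfl
    have h₂ := hp₂.val_sub_eq (congrFun h)
    have hc : c₁ = c₂ := (existsUnique_isMParkingFunction_sub hm _).unique
      (by rwa [h₁]) (by rwa [h₂])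
    subst hc
    rw [Prod.mk.injEq, Subtype.mk.injEq, ← h₁, ← h₂]
    exact ⟨rfl, rfl⟩
  · intro q
    obtain ⟨c, hc, -⟩ := existsUnique_isMParkingFunction_sub hm q
    exact ⟨⟨⟨_, hc⟩, c⟩, funext fun i => by simp⟩

end parkingWalk

/-- For fixed `m ≥ 1`, the number of `m`-parking functions of length `n` is
`(mn+1)^(n-1)`. -/
theorem m_parking_function_count (m n : ℕ) (hm : 1 ≤ m) :
    Nat.card {p : Fin n → ℕ // IsMParkingFunction m n p} = (m * n + 1) ^ (n - 1) := by
  have h := Nat.card_congr (Equiv.ofBijective _ (bijective_natCast_add (n := n) hm))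
  rw [Nat.card_prod, Nat.card_zmod, Nat.card_fun, Nat.card_zmod, Nat.card_fin] at h
  rcases n with _ | n
  · simpa using h
  · rw [pow_succ] at h
    exact Nat.eq_of_mul_eq_mul_right (Nat.succ_pos _) h
end

section
/- For each n ≥ 2 and each nonnegative integer k ≤ n+1 - 1, the sum over set partitions (B_1,...,B_{n+1-k}) of {1,...,n+1} into n+1-k blocks of the product |B_1|^{|B_1|-1} * ... * |B_{n+1-k}|^{|B_{n+1-k}|-1} equals (n+1)^k * binomial(n, n-k). -/
/-- `P` is (the set of blocks of) a set partition of `{1,...,n+1}`: its blocks are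
nonempty, pairwise disjoint, and their union is everything. -/
def IsSetPartition (n : ℕ) (P : Finset (Finset (Fin (n + 1)))) : Prop :=
  (∀ b ∈ P, b.Nonempty) ∧
    (∀ b ∈ P, ∀ c ∈ P, b ≠ c → Disjoint b c) ∧
    P.sup id = Finset.univ

/-!
Weight each block `B` by `X * |B| ^ (|B| - 1)` and let `F(S)` be the sum over all set partitions
of `S` of the product of the weights, so that the coefficient of `X ^ j` is the sum over the
partitions into `j` blocks. Splitting off the block of a fixed `a ∈ S` gives
`F(S) = ∑_{B ∋ a} X |B| ^ (|B| - 1) F(S \ B)`, and Abel's identity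
`∑ₖ C(m, k) x (x + k) ^ (k - 1) (y + m - k) ^ (m - k) = (x + y + m) ^ m`, at `x = X`, `y = 1`,
shows that `F(S) = X (X + N) ^ (N - 1)` with `N = |S|` solves this recursion. Its coefficient
of `X ^ (n + 1 - k)` for `N = n + 1` is `(n + 1) ^ k C(n, n - k)`.

Abel's identity is proved by induction on `m`: in `y`, both sides have derivative `m` times the
case `m - 1` at `y + 1`, and both vanish at `y = -(x + m)`, the left side because the `m`-th
finite difference of `(x + k) ^ (m - 1)` is zero.
-/

open Polynomial Finset

theorem Polynomial.eq_of_derivative_eq_of_eval_eq {R : Type*} [Ring R] [IsAddTorsionFree R]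
    {p q : R[X]} (hd : derivative p = derivative q) {a : R} (ha : p.eval a = q.eval a) :
    p = q := by
  have hC : p - q = C ((p - q).coeff 0) :=
    eq_C_of_derivative_eq_zero (by rw [derivative_sub, hd, sub_self])
  have h0 : (p - q).coeff 0 = 0 := by simpa [ha] using (congrArg (eval a) hC).symm
  rw [h0, C_0] at hC
  exact sub_eq_zero.mp hC

theorem sum_neg_one_pow_mul_choose_mul_add_pow_of_lt {R : Type*} [CommRing R] {j m : ℕ}
    (hj : j < m) (x : R) :
    ∑ k ∈ range (m + 1), (-1) ^ (m - k) * (m.choose k : R) * (x + k) ^ j = 0 := by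
  have h := congrFun (fwdDiff_iter_pow_eq_zero_of_lt (R := R) hj) x
  rw [fwdDiff_iter_eq_sum_shift] at h
  simpa [zsmul_eq_mul] using h

theorem coeff_sum_prod_X_mul_C {β R : Type*} [CommSemiring R] (s : Finset (Finset β))
    (c : β → R) (j : ℕ) :
    (∑ P ∈ s, ∏ b ∈ P, X * C (c b)).coeff j = ∑ P ∈ s with #P = j, ∏ b ∈ P, c b := by
  rw [finsetSum_coeff, sum_filter]
  refine sum_congr rfl fun P _ => ?_
  rw [prod_mul_distrib, prod_const, ← map_prod, mul_comm, coeff_C_mul_X_pow]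
  simp only [eq_comm]

section Abel

variable {R : Type*}

/-- `x (x + k) ^ (k - 1)`, read as `x * x⁻¹ = 1` at `k = 0` (truncated subtraction would
give `x`). -/
def abelCoeff [CommSemiring R] (x : R) : ℕ → R
  | 0 => 1
  | k + 1 => x * (x + (k + 1 : ℕ)) ^ k

theorem coeff_abelCoeff_X_succ_succ [CommSemiring R] (m j : ℕ) :
    (abelCoeff (X : R[X]) (m + 1)).coeff (j + 1) = (m + 1 : R) ^ (m - j) * m.choose j := by
  rw [abelCoeff, coeff_X_mul, ← map_natCast C, coeff_X_add_C_pow]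
  push_cast
  rfl

variable [CommRing R]

theorem abelCoeff_mul_add_pow_succ (x : R) (k l : ℕ) :
    abelCoeff x k * (x + k) ^ (l + 1) = x * (x + k) ^ (k + l) := by
  cases k with
  | zero => simp [abelCoeff, pow_succ']
  | succ k => rw [abelCoeff, mul_assoc, ← pow_add]; ring_nf

/-- The left side of Abel's identity with `y` replaced by `y + X`, so that it can be
differentiated in `y`. -/
noncomputable def abelSum (x : R) (m : ℕ) (y : R) : R[X] :=
  ∑ k ∈ range (m + 1), C (m.choose k * abelCoeff x k) * (X + C (y + (m - k : ℕ))) ^ (m - k)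

theorem derivative_abelSum_succ (x : R) (m : ℕ) (y : R) :
    derivative (abelSum x (m + 1) y) = C ((m + 1 : ℕ) : R) * abelSum x m (y + 1) := by
  have hterm : ∀ k ∈ range (m + 1),
      derivative (C ((m + 1).choose k * abelCoeff x k) *
          (X + C (y + (m + 1 - k : ℕ))) ^ (m + 1 - k))
        = C ((m + 1 : ℕ) : R) *
          (C (m.choose k * abelCoeff x k) * (X + C (y + 1 + (m - k : ℕ))) ^ (m - k)) := by
    intro k hk
    have hkm : k ≤ m := Nat.lt_succ_iff.mp (mem_range.mp hk)
    have hchoose : ((m + 1).choose k * ((m - k : ℕ) + 1) : R) = (m + 1 : ℕ) * m.choose k := by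
      have := Nat.choose_mul_succ_eq m k
      rw [Nat.sub_add_comm hkm] at this
      exact_mod_cast congrArg (Nat.cast (R := R)) (this.symm.trans (mul_comm _ _))
    rw [derivative_C_mul, derivative_X_add_C_pow, Nat.sub_add_comm hkm, Nat.add_sub_cancel,
      Nat.cast_add_one, add_right_comm y, ← mul_assoc, ← mul_assoc, ← C_mul, ← C_mul,
      mul_right_comm, hchoose, mul_assoc, add_assoc]
  rw [abelSum, abelSum, map_sum, sum_range_succ, Nat.sub_self, pow_zero, mul_one, derivative_C,
    add_zero, sum_congr rfl hterm, ← mul_sum]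

theorem eval_abelSum_succ (x : R) (m : ℕ) (y : R) :
    (abelSum x (m + 1) y).eval (-(x + y + (m + 1 : ℕ))) = 0 := by
  have hterm : ∀ k ∈ range (m + 1 + 1),
      eval (-(x + y + (m + 1 : ℕ)))
          (C ((m + 1).choose k * abelCoeff x k) * (X + C (y + (m + 1 - k : ℕ))) ^ (m + 1 - k))
        = x * ((-1) ^ (m + 1 - k) * ((m + 1).choose k : R) * (x + k) ^ m) := by
    intro k hk
    have hkm : k ≤ m + 1 := Nat.lt_succ_iff.mp (mem_range.mp hk)
    have hbase : -(x + y + (m + 1 : ℕ)) + (y + (m + 1 - k : ℕ)) = -1 * (x + k) := by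
      push_cast [Nat.cast_sub hkm]; ring
    rcases Nat.lt_or_ge m k with hlt | hle
    · obtain rfl : k = m + 1 := by omega
      simp [abelCoeff]
    · have h := abelCoeff_mul_add_pow_succ x k (m - k)
      rw [Nat.add_sub_cancel' hle] at h
      rw [eval_mul, eval_C, eval_pow, eval_add, eval_X, eval_C, hbase, mul_pow,
        Nat.sub_add_comm hle]
      linear_combination ((-1) ^ (m - k + 1) * ((m + 1).choose k : R)) * h
  rw [abelSum, eval_finsetSum, sum_congr rfl hterm, ← mul_sum,
    sum_neg_one_pow_mul_choose_mul_add_pow_of_lt (Nat.lt_succ_self m), mul_zero]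

variable [IsAddTorsionFree R]

theorem abelSum_eq (x : R) (m : ℕ) (y : R) : abelSum x m y = (X + C (x + y + m)) ^ m := by
  induction m generalizing y with
  | zero => simp [abelSum, abelCoeff]
  | succ m ih =>
    refine eq_of_derivative_eq_of_eval_eq ?_ (a := -(x + y + (m + 1 : ℕ))) ?_
    · rw [derivative_abelSum_succ, ih, derivative_X_add_C_pow]
      push_cast
      ring_nf
    · rw [eval_abelSum_succ, eval_pow, eval_add, eval_X, eval_C, neg_add_cancel,
        zero_pow (Nat.succ_ne_zero m)]

theorem abel_identity (x y : R) (m : ℕ) :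
    ∑ k ∈ range (m + 1), m.choose k * abelCoeff x k * (y + (m - k : ℕ)) ^ (m - k)
      = (x + y + m) ^ m := by
  simpa [abelSum, eval_finsetSum] using congrArg (eval 0) (abelSum_eq x m y)

end Abel

theorem abelCoeff_X_succ {R : Type*} [CommRing R] [IsDomain R] [CharZero R] (r : ℕ) :
    abelCoeff (X : R[X]) (r + 1) =
      ∑ k ∈ range (r + 1),
        r.choose k • (X * C (((r - k + 1 : ℕ) : R) ^ (r - k)) * abelCoeff X k) := by
  calc abelCoeff (X : R[X]) (r + 1)
      = X * (X + 1 + (r : R[X])) ^ r := by rw [abelCoeff]; push_cast; ring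
    _ = X * ∑ k ∈ range (r + 1),
          (r.choose k : R[X]) * abelCoeff X k * (1 + ((r - k : ℕ) : R[X])) ^ (r - k) := by
        rw [abel_identity]
    _ = _ := by
        rw [mul_sum]
        refine sum_congr rfl fun k _ => ?_
        rw [nsmul_eq_mul, map_pow, map_natCast]
        push_cast
        ring

section SetPartition

variable {α : Type*} [DecidableEq α] {S B : Finset α} {P Q : Finset (Finset α)} {a : α}

theorem sum_powerset_filter_mem_eq_sum_powerset_erase {M : Type*} [AddCommMonoid M]
    (f : Finset α → Finset α → M) (ha : a ∈ S) :
    ∑ B ∈ S.powerset with a ∈ B, f B (S \ B) = ∑ C ∈ (S.erase a).powerset, f (S \ C) C := by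
  refine sum_nbij' (S \ ·) (S \ ·) ?_ ?_ ?_ ?_ ?_
  · intro B hB
    simp only [mem_filter, mem_powerset] at hB ⊢
    grind
  · intro C hC
    simp only [mem_filter, mem_powerset] at hC ⊢
    grind
  · intro B hB
    exact Finset.sdiff_sdiff_eq_self (mem_powerset.1 (mem_filter.1 hB).1)
  · intro C hC
    exact Finset.sdiff_sdiff_eq_self ((mem_powerset.1 hC).trans (erase_subset a S))
  · intro B hB
    rw [Finset.sdiff_sdiff_eq_self (mem_powerset.1 (mem_filter.1 hB).1)]

def IsSetPartitionOf (S : Finset α) (P : Finset (Finset α)) : Prop :=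
  (∀ b ∈ P, b.Nonempty) ∧ (∀ b ∈ P, ∀ c ∈ P, b ≠ c → Disjoint b c) ∧ P.sup id = S

theorem IsSetPartitionOf.subset (hP : IsSetPartitionOf S P) (hB : B ∈ P) : B ⊆ S :=
  hP.2.2 ▸ le_sup (f := id) hB

theorem IsSetPartitionOf.existsUnique_mem (hP : IsSetPartitionOf S P) (ha : a ∈ S) :
    ∃! b, b ∈ P ∧ a ∈ b := by
  obtain ⟨b, hb, hab⟩ := mem_sup.1 (hP.2.2 ▸ ha : a ∈ P.sup id)
  refine ⟨b, ⟨hb, hab⟩, fun c ⟨hc, hac⟩ => ?_⟩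
  by_contra hcb
  exact disjoint_left.1 (hP.2.1 c hc b hb hcb) hac hab

theorem IsSetPartitionOf.erase (hP : IsSetPartitionOf S P) (hB : B ∈ P) :
    IsSetPartitionOf (S \ B) (P.erase B) := by
  obtain ⟨hne, hdisj, hsup⟩ := hP
  refine ⟨fun b hb => hne b (mem_of_mem_erase hb),
    fun b hb c hc => hdisj b (mem_of_mem_erase hb) c (mem_of_mem_erase hc), ?_⟩
  rw [← hsup, ← insert_erase hB, sup_insert, id, insert_erase hB, sup_eq_union,
    union_sdiff_left, sdiff_eq_self_of_disjoint]
  exact Finset.disjoint_sup_left.2 fun c hc =>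
    hdisj c (mem_of_mem_erase hc) B hB (ne_of_mem_erase hc)

theorem IsSetPartitionOf.disjoint_of_sdiff (hQ : IsSetPartitionOf (S \ B) Q) {c : Finset α}
    (hc : c ∈ Q) : Disjoint c B :=
  disjoint_of_subset_left (hQ.subset hc) sdiff_disjoint

theorem IsSetPartitionOf.notMem_of_sdiff (hQ : IsSetPartitionOf (S \ B) Q) (hB : B.Nonempty) :
    B ∉ Q := fun hBQ => hB.ne_empty (disjoint_self.1 (hQ.disjoint_of_sdiff hBQ))

theorem IsSetPartitionOf.insert (hQ : IsSetPartitionOf (S \ B) Q) (hBS : B ⊆ S)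
    (hB : B.Nonempty) : IsSetPartitionOf S (insert B Q) := by
  refine ⟨forall_mem_insert _ _ _ |>.2 ⟨hB, hQ.1⟩, ?_, ?_⟩
  · simp only [mem_insert]
    rintro b (rfl | hb) c (rfl | hc) hbc
    · exact absurd rfl hbc
    · exact (hQ.disjoint_of_sdiff hc).symm
    · exact hQ.disjoint_of_sdiff hb
    · exact hQ.2.1 b hb c hc hbc
  · rw [sup_insert, hQ.2.2, id, sup_eq_union, union_sdiff_of_subset hBS]

theorem isSetPartitionOf_empty_iff : IsSetPartitionOf ∅ P ↔ P = ∅ := by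
  refine ⟨fun hP => eq_empty_of_forall_notMem fun b hb => ?_, fun hP => ?_⟩
  · obtain ⟨x, hx⟩ := hP.1 b hb
    exact notMem_empty x (hP.subset hb hx)
  · subst hP
    simp [IsSetPartitionOf]

open Classical in
noncomputable def setPartitions (S : Finset α) : Finset (Finset (Finset α)) :=
  S.powerset.powerset.filter (IsSetPartitionOf S)

theorem mem_setPartitions : P ∈ setPartitions S ↔ IsSetPartitionOf S P := by
  simp only [setPartitions, mem_filter, mem_powerset, and_iff_right_iff_imp]
  exact fun hP b hb => mem_powerset.2 (hP.subset hb)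

variable {R : Type*} [CommSemiring R]

noncomputable def partitionSum (w : Finset α → R) (S : Finset α) : R :=
  ∑ P ∈ setPartitions S, ∏ b ∈ P, w b

theorem partitionSum_empty (w : Finset α → R) : partitionSum w ∅ = 1 := by
  have : setPartitions (∅ : Finset α) = {∅} := by
    ext P
    rw [mem_setPartitions, isSetPartitionOf_empty_iff, mem_singleton]
  rw [partitionSum, this, sum_singleton, prod_empty]

theorem partitionSum_eq_sum_block (w : Finset α → R) (ha : a ∈ S) :
    partitionSum w S = ∑ B ∈ S.powerset with a ∈ B, w B * partitionSum w (S \ B) := by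
  have hsplit : ∀ P ∈ setPartitions S,
      ∏ b ∈ P, w b = ∑ B ∈ P with a ∈ B, w B * ∏ b ∈ P.erase B, w b := by
    intro P hP
    obtain ⟨B, ⟨hB, haB⟩, huniq⟩ := (mem_setPartitions.1 hP).existsUnique_mem ha
    rw [eq_singleton_iff_unique_mem.2 ⟨mem_filter.2 ⟨hB, haB⟩,
      fun c hc => huniq c (mem_filter.1 hc)⟩, sum_singleton, mul_prod_erase _ _ hB]
  have hblock : ∀ B ∈ S.powerset.filter (a ∈ ·),
      ∑ P ∈ setPartitions S with B ∈ P, w B * ∏ b ∈ P.erase B, w b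
        = w B * partitionSum w (S \ B) := by
    intro B hB
    obtain ⟨hBS, haB⟩ := mem_filter.1 hB
    have hBne : B.Nonempty := ⟨a, haB⟩
    rw [partitionSum, mul_sum]
    refine sum_nbij' (·.erase B) (insert B ·) ?_ ?_ ?_ ?_ fun _ _ => rfl
    · intro P hP
      obtain ⟨hP, hBP⟩ := mem_filter.1 hP
      exact mem_setPartitions.2 ((mem_setPartitions.1 hP).erase hBP)
    · intro Q hQ
      exact mem_filter.2 ⟨mem_setPartitions.2 ((mem_setPartitions.1 hQ).insert
        (mem_powerset.1 hBS) hBne), mem_insert_self B Q⟩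
    · intro P hP
      exact insert_erase (mem_filter.1 hP).2
    · intro Q hQ
      exact erase_insert ((mem_setPartitions.1 hQ).notMem_of_sdiff hBne)
  rw [partitionSum, sum_congr rfl hsplit, ← sum_congr rfl hblock]
  refine sum_comm' fun P B => ?_
  simp only [mem_filter, mem_powerset, mem_setPartitions]
  exact ⟨fun ⟨hP, hB, haB⟩ => ⟨⟨hP, hB⟩, hP.subset hB, haB⟩,
    fun ⟨⟨hP, hB⟩, _, haB⟩ => ⟨hP, hB, haB⟩⟩

end SetPartition

theorem partitionSum_X_mul_card_pow_eq_abelCoeff {α R : Type*} [DecidableEq α] [CommRing R]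
    [IsDomain R] [CharZero R] (S : Finset α) :
    partitionSum (fun b => X * C ((#b : R) ^ (#b - 1))) S = abelCoeff X #S := by
  set w : Finset α → R[X] := fun b => X * C ((#b : R) ^ (#b - 1))
  induction S using Finset.strongInduction with
  | H S ih =>
  rcases S.eq_empty_or_nonempty with rfl | ⟨a, ha⟩
  · rw [partitionSum_empty, card_empty, abelCoeff]
  generalize hr : #(S.erase a) = r
  have hS : #S = r + 1 := by rw [← hr, card_erase_add_one ha]
  have hterm : ∀ T ∈ (S.erase a).powerset, w (S \ T) * partitionSum w T
      = X * C (((r - #T + 1 : ℕ) : R) ^ (r - #T)) * abelCoeff X #T := by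
    intro T hT
    have hcard : #(S \ T) = r - #T + 1 := by
      rw [card_sdiff_of_subset ((mem_powerset.1 hT).trans (erase_subset a S)), hS]
      have := card_le_card (mem_powerset.1 hT)
      omega
    rw [ih T ((mem_powerset.1 hT).trans_ssubset (erase_ssubset ha))]
    simp only [w, hcard, Nat.add_sub_cancel]
  rw [partitionSum_eq_sum_block w ha,
    sum_powerset_filter_mem_eq_sum_powerset_erase (fun B T => w B * partitionSum w T) ha,
    sum_congr rfl hterm,
    sum_powerset_apply_card fun k => X * C (((r - k + 1 : ℕ) : R) ^ (r - k)) * abelCoeff X k,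
    hr, hS, abelCoeff_X_succ]

open Classical in
theorem headley_coefficient_identity_general (n k : ℕ) (hk : k ≤ n + 1 - 1) :
    ∑ P ∈ (Finset.univ : Finset (Finset (Finset (Fin (n + 1))))).filter
        (fun P => IsSetPartition n P ∧ P.card = n + 1 - k),
      ∏ b ∈ P, b.card ^ (b.card - 1)
      = (n + 1) ^ k * n.choose (n - k) := by
  have hkn : k ≤ n := by omega
  have hfilter : univ.filter (fun P => IsSetPartition n P ∧ P.card = n + 1 - k)
      = (setPartitions univ).filter (#· = n - k + 1) := by
    ext P
    simp [mem_setPartitions, IsSetPartition, IsSetPartitionOf, Nat.sub_add_comm hkn]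
  have hcoeff := congrArg (coeff · (n - k + 1))
    (partitionSum_X_mul_card_pow_eq_abelCoeff (R := ℤ) (univ : Finset (Fin (n + 1))))
  rw [partitionSum, coeff_sum_prod_X_mul_C, card_univ, Fintype.card_fin,
    coeff_abelCoeff_X_succ_succ, Nat.sub_sub_self hkn] at hcoeff
  rw [hfilter]
  exact_mod_cast hcoeff

open Classical in
/-- For `n ≥ 2` and `k ≤ n`, the sum over set partitions `(B₁,...,B_{n+1-k})` of
`{1,...,n+1}` into `n+1-k` blocks of `∏ |B_i|^{|B_i|-1}` equals
`(n+1)^k * C(n, n-k)`. -/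
theorem headley_coefficient_identity (n k : ℕ) (hn : 2 ≤ n) (hk : k ≤ n + 1 - 1) :
    ∑ P ∈ (Finset.univ : Finset (Finset (Finset (Fin (n + 1))))).filter
        (fun P => IsSetPartition n P ∧ P.card = n + 1 - k),
      ∏ b ∈ P, b.card ^ (b.card - 1)
      = (n + 1) ^ k * n.choose (n - k) :=
  headley_coefficient_identity_general n k hk
end

section
/- Define f_0 = 1 and f_n = (mn+1)^{n-1} for n ≥ 1. Then the exponential generating function f(x) = Σ_{n≥0} f_n x^n / n! satisfies the functional equation f = e^{x f^m}. -/
/-! The Abel polynomials `Aₙ(x) = x (x + n a)ⁿ⁻¹` (`A₀ = 1`) are of binomial type,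
`Aₙ(x + y) = Σₖ C(n,k) Aₖ(x) Aₙ₋ₖ(y)`: by induction on `n`, both sides agree at `x = 0` and have
the same derivative in `x`, thanks to `Aₙ₊₁' = (n + 1) Aₙ(x + a)`. Hence `F_t = Σ Aₙ(t) xⁿ/n!`
satisfies `F_{s+t} = F_s F_t`. For `a = m` we have `f = F_1`, so `fᵏ = F_k`, and the `n`-th
coefficient of `Σ_j (x fᵐ)ʲ/j!` is `Σ_j C(n,j) Aₙ₋ⱼ(jm)/n!`; since `Aₙ₋ⱼ(jm) = jm (nm)ⁿ⁻ʲ⁻¹`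
for `j < n`, this sum is a binomial expansion of `(1 + nm)ⁿ⁻¹ = Aₙ(1)`. -/

open PowerSeries

/-- The numbers `f_0 = 1` and `f_n = (mn+1)^(n-1)` for `n ≥ 1` (the number of regions
of the extended Shi arrangement `Shiᵐ` of type `A_{n-1}`). -/
def shiRegions (m n : ℕ) : ℕ := if n = 0 then 1 else (m * n + 1) ^ (n - 1)

/-- The exponential generating function `f(x) = Σ_{n ≥ 0} f_n xⁿ/n!`. -/
noncomputable def shiEGF (m : ℕ) : PowerSeries ℚ :=
  PowerSeries.mk fun n => (shiRegions m n : ℚ) / (n.factorial : ℚ)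

open Finset Nat

namespace Polynomial

variable {R : Type*} [CommRing R]

noncomputable def abelPoly (a : R) (n : ℕ) : R[X] :=
  if n = 0 then 1 else X * (X + C (n * a)) ^ (n - 1)

theorem eq_of_derivative_eq_of_eval_zero_eq [IsAddTorsionFree R] {p q : R[X]}
    (hd : derivative p = derivative q) (h0 : p.eval 0 = q.eval 0) : p = q := by
  have h := eq_C_of_derivative_eq_zero (p := p - q) (by rw [derivative_sub, hd, sub_self])
  rwa [coeff_zero_eq_eval_zero, eval_sub, h0, sub_self, map_zero, sub_eq_zero] at h

variable (a : R)

@[simp] theorem abelPoly_zero : abelPoly a 0 = 1 := rfl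

theorem abelPoly_succ (n : ℕ) : abelPoly a (n + 1) = X * (X + C ((n + 1) * a)) ^ n := by
  simp [abelPoly]

theorem eval_abelPoly_succ (n : ℕ) (t : R) :
    (abelPoly a (n + 1)).eval t = t * (t + (n + 1) * a) ^ n := by
  simp [abelPoly_succ]

theorem derivative_abelPoly_succ (n : ℕ) :
    derivative (abelPoly a (n + 1)) = (n + 1) * (abelPoly a n).comp (X + C a) := by
  cases n with
  | zero => simp [abelPoly_succ]
  | succ n =>
    rw [abelPoly_succ, abelPoly_succ, derivative_mul, derivative_X, derivative_pow,
      derivative_X_add_C, mul_comp, X_comp, pow_comp, add_comp, X_comp, C_comp,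
      add_tsub_cancel_right]
    simp only [cast_add, cast_one, map_add, map_mul, map_natCast, map_one]
    ring

theorem abelPoly_comp_X_add_C [IsAddTorsionFree R] (n : ℕ) (y : R) :
    (abelPoly a n).comp (X + C y) =
      ∑ p ∈ antidiagonal n, C (n.choose p.1 * (abelPoly a p.2).eval y) * abelPoly a p.1 := by
  induction n with
  | zero => simp
  | succ n ih =>
    refine eq_of_derivative_eq_of_eval_zero_eq ?_ ?_
    · rw [derivative_comp, derivative_abelPoly_succ, derivative_sum, Nat.sum_antidiagonal_succ]
      simp only [abelPoly_zero, derivative_mul, derivative_C, derivative_one, zero_mul, zero_add,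
        mul_zero]
      calc _ = (n + 1) * ((abelPoly a n).comp (X + C y)).comp (X + C a) := by
            simp only [derivative_add, derivative_X, derivative_C, add_zero, one_mul, mul_comp,
              comp_assoc, add_comp, X_comp, C_comp, natCast_comp, one_comp]
            ring_nf
        _ = _ := by
          rw [ih, sum_comp, mul_sum]
          refine sum_congr rfl fun p _ => ?_
          have hchoose : ((n + 1).choose (p.1 + 1) * (p.1 + 1) : R[X]) = (n + 1) * n.choose p.1 :=
            by simpa using congrArg (Nat.cast : ℕ → R[X]) (Nat.add_one_mul_choose_eq n p.1).symm
          simp only [derivative_abelPoly_succ, mul_comp, C_comp, C_mul, map_natCast, natCast_comp]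
          linear_combination
            C (eval y (abelPoly a p.2)) * (abelPoly a p.1).comp (X + C a) * hchoose.symm
    · simp [eval_finsetSum, Nat.sum_antidiagonal_succ, eval_abelPoly_succ]

theorem eval_add_abelPoly [IsAddTorsionFree R] (n : ℕ) (x y : R) :
    (abelPoly a n).eval (x + y) =
      ∑ p ∈ antidiagonal n, n.choose p.1 * (abelPoly a p.1).eval x * (abelPoly a p.2).eval y := by
  rw [show x + y = (X + C y).eval x by simp, ← eval_comp, abelPoly_comp_X_add_C, eval_finsetSum]
  refine sum_congr rfl fun p _ => ?_
  rw [eval_mul, eval_C]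
  ring

theorem choose_mul_eval_abelPoly {i l k : ℕ} (h : i + l = k) (t : R) :
    ((k + 1).choose (i + 1) : R) * t ^ (i + 1) * (abelPoly a l).eval ((i + 1 : ℕ) * a) =
      t * (k.choose i * t ^ i * ((k + 1) * a) ^ l) := by
  cases l with
  | zero => simp [← h]; ring
  | succ l =>
    have hchoose : ((k + 1).choose (i + 1) * (i + 1) : R) = (k + 1) * k.choose i := by
      simpa using congrArg (Nat.cast : ℕ → R) (Nat.add_one_mul_choose_eq k i).symm
    have hk : ((i + 1 : ℕ) * a + (l + 1) * a : R) = (k + 1) * a := by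
      rw [← h]; push_cast; ring
    rw [eval_abelPoly_succ, hk]
    push_cast
    linear_combination t * t ^ i * a * ((k + 1) * a) ^ l * hchoose

theorem sum_antidiagonal_choose_mul_eval_abelPoly (n : ℕ) (t : R) :
    ∑ p ∈ antidiagonal n, n.choose p.1 * t ^ p.1 * (abelPoly a p.2).eval (p.1 * a) =
      (abelPoly a n).eval t := by
  cases n with
  | zero => simp
  | succ k =>
    rw [Nat.sum_antidiagonal_succ, Nat.cast_zero, zero_mul, eval_abelPoly_succ a k 0, zero_mul,
      mul_zero, zero_add, eval_abelPoly_succ, (Commute.all t _).add_pow', mul_sum]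
    refine sum_congr rfl fun p hp => ?_
    rw [choose_mul_eval_abelPoly a (mem_antidiagonal.mp hp), nsmul_eq_mul, mul_assoc]

end Polynomial

section AbelEGF

open Polynomial (abelPoly eval_abelPoly_succ eval_add_abelPoly
  sum_antidiagonal_choose_mul_eval_abelPoly)

variable {K : Type*} [Field K] (a : K)

noncomputable def abelEGF (t : K) : K⟦X⟧ := mk fun n => (abelPoly a n).eval t / n !

theorem coeff_abelEGF (t : K) (n : ℕ) : coeff n (abelEGF a t) = (abelPoly a n).eval t / n ! :=
  coeff_mk _ _

variable [CharZero K]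

theorem abelEGF_zero : abelEGF a 0 = 1 := by
  ext (_ | n) <;> simp [coeff_abelEGF, eval_abelPoly_succ, coeff_one]

theorem abelEGF_add (s t : K) : abelEGF a (s + t) = abelEGF a s * abelEGF a t := by
  ext n
  rw [coeff_mul, coeff_abelEGF, eval_add_abelPoly, sum_div]
  refine sum_congr rfl fun p hp => ?_
  rw [coeff_abelEGF, coeff_abelEGF, ← mem_antidiagonal.mp hp, cast_add_choose]
  have : ((p.1 + p.2)! : K) ≠ 0 := mod_cast factorial_ne_zero _
  field_simp

theorem abelEGF_pow (t : K) (k : ℕ) : abelEGF a t ^ k = abelEGF a (k * t) := by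
  induction k with
  | zero => simp [abelEGF_zero]
  | succ k ih => rw [pow_succ, ih, ← abelEGF_add]; push_cast; ring_nf

theorem coeff_abelEGF_eq_sum (t : K) (n : ℕ) :
    coeff n (abelEGF a t) =
      ∑ p ∈ antidiagonal n, t ^ p.1 / p.1 ! * coeff p.2 (abelEGF a (p.1 * a)) := by
  rw [coeff_abelEGF, ← sum_antidiagonal_choose_mul_eval_abelPoly, sum_div]
  refine sum_congr rfl fun p hp => ?_
  rw [coeff_abelEGF, ← mem_antidiagonal.mp hp, cast_add_choose]
  have : ((p.1 + p.2)! : K) ≠ 0 := mod_cast factorial_ne_zero _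
  field_simp

end AbelEGF

theorem shiEGF_eq_abelEGF (m : ℕ) : shiEGF m = abelEGF (m : ℚ) 1 := by
  ext (_ | n)
  · simp [shiEGF, shiRegions, coeff_abelEGF]
  · rw [shiEGF, coeff_mk, coeff_abelEGF, Polynomial.eval_abelPoly_succ, shiRegions,
      if_neg n.succ_ne_zero, add_tsub_cancel_right]
    push_cast
    ring

theorem shi_egf_functional_equation_general (m : ℕ) :
    ∀ n : ℕ, (PowerSeries.coeff n) (shiEGF m)
      = (PowerSeries.coeff n)
          (∑ j ∈ Finset.range (n + 1),
            ((j.factorial : ℚ)⁻¹) • (PowerSeries.X * (shiEGF m) ^ m) ^ j) := by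
  intro n
  rw [shiEGF_eq_abelEGF, coeff_abelEGF_eq_sum, Nat.sum_antidiagonal_eq_sum_range_succ
    (fun i l => (1 : ℚ) ^ i / i ! * coeff l (abelEGF (m : ℚ) (i * m))), map_sum]
  refine sum_congr rfl fun j hj => ?_
  rw [coeff_smul, mul_pow, ← pow_mul, abelEGF_pow, coeff_X_pow_mul',
    if_pos (Nat.lt_succ_iff.mp (mem_range.mp hj))]
  simp [mul_comm]

/-- The EGF `f` of the numbers `f_n = (mn+1)^{n-1}` satisfies `f = e^{x fᵐ}`, stated
coefficient-wise: since `(x fᵐ)^j` has order at least `j`, the `n`-th coefficient of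
`e^{x fᵐ} = Σ_j (x fᵐ)^j / j!` equals that of the partial sum `Σ_{j ≤ n}`. -/
theorem shi_egf_functional_equation (m : ℕ) (hm : 1 ≤ m) :
    ∀ n : ℕ, (PowerSeries.coeff n) (shiEGF m)
      = (PowerSeries.coeff n)
          (∑ j ∈ Finset.range (n + 1),
            ((j.factorial : ℚ)⁻¹) • (PowerSeries.X * (shiEGF m) ^ m) ^ j) :=
  shi_egf_functional_equation_general m
end

section
/- An n-core partition never has both an addable box and a removable box of the same residue k, where the residue of the box in row i and column j is (j - i) mod n. -/
/-- The hook length of the box in row `i`, column `c` (both `0`-indexed) of the Young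
diagram of the partition `l`. -/
noncomputable def hookLen (l : ℕ → ℕ) (i c : ℕ) : ℕ :=
  (l i - c) + Set.ncard {r : ℕ | i < r ∧ c < l r}

/-- `l` is a partition: weakly decreasing and eventually zero. -/
def IsPartition (l : ℕ → ℕ) : Prop := Antitone l ∧ ∃ N, ∀ i, N ≤ i → l i = 0

/-- The last box of row `i` (in position `(i, l i - 1)`, `0`-indexed) is removable:
deleting it leaves the Young diagram of a partition. -/
def Removable (l : ℕ → ℕ) (i : ℕ) : Prop := 0 < l i ∧ l (i + 1) < l i

/-- A box can be added at the end of row `i` (in position `(i, l i)`, `0`-indexed):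
adding it yields the Young diagram of a partition. -/
def Addable (l : ℕ → ℕ) (i : ℕ) : Prop := i = 0 ∨ l i < l (i - 1)

/-- The residue mod `n` of the box in row `i`, column `j` (`0`-indexed): `(j - i) mod n`. -/
def residue (n : ℕ) (i j : ℕ) : ℤ := ((j : ℤ) - (i : ℤ)) % (n : ℤ)

/-!
Write `cont (r, c) = c - r` for the content of the position in row `r`, column `c`. If the leg
of the box `(i, c)` ends in row `j` (that is, `l (j + 1) ≤ c < l j`), its hook length is
`cont (i, l i) - cont (j, c)`. A removable box in row `i` and an addable position in row `i'` of
the same residue would therefore produce a hook length divisible by `n`: the box `(i, l i')`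
when `i < i'` (its leg ends in row `i' - 1`), and the box `(i', l i - 1)` when `i' ≤ i` (its leg
ends in row `i`).
-/

theorem ncard_leg_eq {l : ℕ → ℕ} (hl : Antitone l) {i j c : ℕ} (hc : c < l j)
    (hc' : l (j + 1) ≤ c) : {r : ℕ | i < r ∧ c < l r}.ncard = j - i := by
  have hleg : {r : ℕ | i < r ∧ c < l r} = Finset.Ioc i j := by
    ext r
    simp only [Finset.coe_Ioc, Set.mem_Ioc, Set.mem_ofPred_eq, and_congr_right_iff]
    refine fun _ => ⟨fun hr => ?_, fun hr => hc.trans_le (hl hr)⟩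
    by_contra! hjr
    have := hl (show j + 1 ≤ r by omega)
    omega
  rw [hleg, Set.ncard_coe_finset, Nat.card_Ioc]

theorem hookLen_eq_content_sub {l : ℕ → ℕ} (hl : Antitone l) {i j c : ℕ} (hij : i ≤ j)
    (hc : c < l j) (hc' : l (j + 1) ≤ c) :
    (hookLen l i c : ℤ) = ((l i : ℤ) - i) - ((c : ℤ) - j) := by
  have : c < l i := hc.trans_le (hl hij)
  rw [hookLen, ncard_leg_eq hl hc hc']
  omega

theorem n_core_no_addable_removable_same_residue_general (n : ℕ) (l : ℕ → ℕ)
    (hl : IsPartition l) (hcore : ∀ i c : ℕ, c < l i → ¬ (n ∣ hookLen l i c)) :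
    ∀ i i' : ℕ, Removable l i → Addable l i' →
      residue n i (l i - 1) ≠ residue n i' (l i') := by
  rintro i i' ⟨hpos, hrem⟩ hadd hres
  have hmod : (((l i - 1 : ℕ) : ℤ) - i) ≡ ((l i' : ℤ) - i') [ZMOD n] := hres
  rcases lt_or_ge i i' with hii' | hi'i
  · have hadd' : l i' < l (i' - 1) := hadd.resolve_left (by omega)
    have hlt : l i' < l i := hadd'.trans_le (hl.1 (by omega))
    apply hcore i (l i') hlt
    rw [← Int.natCast_dvd_natCast, hookLen_eq_content_sub hl.1 (j := i' - 1) (by omega) hadd'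
      (by rw [Nat.sub_add_cancel (by omega)])]
    convert hmod.symm.dvd using 1
    omega
  · have hle : l i ≤ l i' := hl.1 hi'i
    apply hcore i' (l i - 1) (by omega)
    rw [← Int.natCast_dvd_natCast, hookLen_eq_content_sub hl.1 hi'i (by omega) (by omega)]
    exact hmod.dvd

/-- An `n`-core partition never has both an addable box and a removable box of the same
residue. -/
theorem n_core_no_addable_removable_same_residue (n : ℕ) (hn : 0 < n) (l : ℕ → ℕ)
    (hl : IsPartition l) (hcore : ∀ i c : ℕ, c < l i → ¬ (n ∣ hookLen l i c)) :
    ∀ i i' : ℕ, Removable l i → Addable l i' →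
      residue n i (l i - 1) ≠ residue n i' (l i') :=
  n_core_no_addable_removable_same_residue_general n l hl hcore
end

section
/- The number of regions of a real hyperplane arrangement A in an n-dimensional vector space equals (-1)^n χ_A(-1), where χ_A is the characteristic polynomial of A. -/
open Classical

/-- `H` is an affine hyperplane in `ℝⁿ`: the level set of a nonzero linear functional. -/
def IsHyperplane (n : ℕ) (H : Set (Fin n → ℝ)) : Prop :=
  ∃ (f : (Fin n → ℝ) →ₗ[ℝ] ℝ) (c : ℝ), f ≠ 0 ∧ H = {x | f x = c}

/-- The intersection poset of the arrangement `A`: the nonempty intersections of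
subsets of `A` (the empty intersection giving the whole space), ordered by reverse
inclusion, so that `0̂` is the whole space. -/
def interPoset (n : ℕ) (A : Set (Set (Fin n → ℝ))) : Set (Set (Fin n → ℝ)) :=
  {t | t.Nonempty ∧ ∃ S ⊆ A, t = ⋂₀ S}

/-- The dimension of an element `t` of the intersection poset: the dimension of the
affine subspace `t`. -/
noncomputable def interDim (n : ℕ) (t : Set (Fin n → ℝ)) : ℕ :=
  Module.finrank ℝ (affineSpan ℝ t).direction

/-!
Deletion–restriction. Fix an affine subspace `E` and count the sign vectors whose open cells
meet `E`. Adding a hyperplane `H` with `E ⊄ H` splits exactly the cells that meet `E ∩ H`: a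
convex set open in `E` that meets `H` has points on both sides of it, while a convex set missing
`H` lies on one side. So the count for `E` grows by the count for `E ∩ H`, and the same recursion
holds for Whitney's sum `∑_S (-1)^|S| χ(E ∩ ⋂ S)` with `χ(F) = (-1)^dim F`, because
`dim (E ∩ H) = dim E - 1`. The crosscut theorem identifies the Möbius function of the
intersection poset with `t ↦ ∑_{⋂ S = t} (-1)^|S|`, which turns Whitney's sum at `E = ℝⁿ` into
`χ_A(-1)`. Finally the regions are the nonempty cells: the sign vector is locally constant off
the hyperplanes and its fibres are convex.
-/

open Finset

theorem Finset.eqOn_of_forall_sum_filter_le_eq {β M : Type*} [PartialOrder β] [AddCommGroup M]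
    {L : Finset β} {u v : β → M}
    (h : ∀ t ∈ L, ∑ s ∈ L with t ≤ s, u s = ∑ s ∈ L with t ≤ s, v s) : Set.EqOn u v L := by
  by_contra hne
  simp only [Set.EqOn, not_forall] at hne
  obtain ⟨t₀, ht₀, hne₀⟩ := hne
  obtain ⟨t, ht, hmax⟩ := exists_maximal (s := {t ∈ L | u t ≠ v t}) ⟨t₀, mem_filter.2 ⟨ht₀, hne₀⟩⟩
  rw [mem_filter] at ht
  have hsplit (w : β → M) : ∑ s ∈ L with t ≤ s, w s = w t + ∑ s ∈ L with t < s, w s := by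
    rw [← add_sum_erase _ _ (mem_filter.2 ⟨ht.1, le_rfl⟩)]
    congr 2
    ext s
    simp only [mem_erase, mem_filter, lt_iff_le_and_ne]
    tauto
  have hupper : ∑ s ∈ L with t < s, u s = ∑ s ∈ L with t < s, v s := by
    refine sum_congr rfl fun s hs => ?_
    rw [mem_filter] at hs
    by_contra hsne
    exact (hmax (mem_filter.2 ⟨hs.1, hsne⟩) hs.2.le).not_gt hs.2
  have := h t ht.1
  rw [hsplit, hsplit, hupper, add_left_inj] at this
  exact ht.2 this

theorem IsLocallyConstant.natCard_connectedComponents {X β : Type*} [TopologicalSpace X]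
    {σ : X → β} (hσ : IsLocallyConstant σ)
    (hfib : ∀ x y, σ x = σ y → y ∈ connectedComponent x) :
    Nat.card (ConnectedComponents X) = Nat.card (Set.range σ) := by
  let σ' : ConnectedComponents X → β := Quotient.lift σ fun x y hxy =>
    hσ.apply_eq_of_isPreconnected isPreconnected_connectedComponent mem_connectedComponent
      ((hxy : connectedComponent x = connectedComponent y) ▸ mem_connectedComponent)
  have hinj : σ'.Injective := ConnectedComponents.surjective_coe.forall₂.2 fun x y h =>
    (ConnectedComponents.coe_eq_coe'.2 (hfib y x h.symm))
  rw [← Nat.card_range_of_injective hinj, ← ConnectedComponents.surjective_coe.range_comp σ']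
  rfl

theorem ite_nonempty_lt_add_ite_nonempty_gt {X : Type*} [TopologicalSpace X] {K : Set X}
    (hK : IsPreconnected K) {g : X → ℝ} (hg : ContinuousOn g K) {a : ℝ}
    (h : (K ∩ {x | g x = a}).Nonempty →
      (K ∩ {x | g x < a}).Nonempty ∧ (K ∩ {x | a < g x}).Nonempty) :
    ((if (K ∩ {x | g x < a}).Nonempty then 1 else 0) +
        if (K ∩ {x | a < g x}).Nonempty then 1 else 0) =
      (if K.Nonempty then 1 else 0) + if (K ∩ {x | g x = a}).Nonempty then 1 else 0 := by
  by_cases h₀ : (K ∩ {x | g x = a}).Nonempty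
  · obtain ⟨hlt, hgt⟩ := h h₀
    simp [hlt, hgt, h₀, h₀.mono Set.inter_subset_left]
  have hnot_both : ¬((K ∩ {x | g x < a}).Nonempty ∧ (K ∩ {x | a < g x}).Nonempty) := by
    rintro ⟨⟨x, hxK, hx⟩, ⟨y, hyK, hy⟩⟩
    obtain ⟨z, hzK, hz⟩ := hK.intermediate_value hxK hyK hg ⟨le_of_lt hx, le_of_lt hy⟩
    exact h₀ ⟨z, hzK, hz⟩
  have hK_iff : K.Nonempty ↔ (K ∩ {x | g x < a}).Nonempty ∨ (K ∩ {x | a < g x}).Nonempty := by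
    refine ⟨fun ⟨x, hx⟩ => ?_, fun h => h.elim (·.mono Set.inter_subset_left)
      (·.mono Set.inter_subset_left)⟩
    rcases lt_trichotomy (g x) a with hlt | heq | hgt
    exacts [Or.inl ⟨x, hx, hlt⟩, (h₀ ⟨x, hx, heq⟩).elim, Or.inr ⟨x, hx, hgt⟩]
  simp only [if_neg h₀, hK_iff]
  split_ifs <;> tauto

open Filter Topology in
theorem AffineSubspace.nonempty_lt_and_gt_of_isOpen {V : Type*} [NormedAddCommGroup V]
    [NormedSpace ℝ V] {U : Set V} (hU : IsOpen U) {E : AffineSubspace ℝ V} {φ : V →ₗ[ℝ] ℝ}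
    {x v : V} (hxU : x ∈ U) (hxE : x ∈ E) (hv : v ∈ E.direction) (hφv : φ v ≠ 0) :
    (U ∩ E ∩ {y | φ y < φ x}).Nonempty ∧ (U ∩ E ∩ {y | φ x < φ y}).Nonempty := by
  have hline : ∀ᶠ t in 𝓝 (0 : ℝ), x + t • v ∈ U :=
    (Continuous.tendsto' (by fun_prop) 0 x (by simp)).eventually (hU.mem_nhds hxU)
  have hline' : ∀ᶠ t in 𝓝 (0 : ℝ), x + (-t) • v ∈ U :=
    (continuous_neg.tendsto' (0 : ℝ) 0 neg_zero).eventually hline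
  obtain ⟨t, ⟨htU, htU'⟩, ht⟩ :=
    ((hline.and hline').filter_mono nhdsWithin_le_nhds |>.and self_mem_nhdsWithin :
      ∀ᶠ t in 𝓝[≠] (0 : ℝ), _).exists
  have hmem (r : ℝ) : x + r • v ∈ E := by
    simpa [vadd_eq_add, add_comm] using
      AffineSubspace.vadd_mem_of_mem_direction (E.direction.smul_mem r hv) hxE
  have hval (r : ℝ) : φ (x + r • v) = φ x + r * φ v := by simp
  rcases (mul_ne_zero (ht : t ≠ 0) hφv).lt_or_gt with hneg | hpos
  · exact ⟨⟨_, ⟨htU, hmem t⟩, by simp only [Set.mem_ofPred, hval]; linarith⟩,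
      ⟨_, ⟨htU', hmem (-t)⟩, by simp only [Set.mem_ofPred, hval]; linarith⟩⟩
  · exact ⟨⟨_, ⟨htU', hmem (-t)⟩, by simp only [Set.mem_ofPred, hval]; linarith⟩,
      ⟨_, ⟨htU, hmem t⟩, by simp only [Set.mem_ofPred, hval]; linarith⟩⟩

namespace HyperplaneArrangement

section Crosscut

variable {α : Type*} (s : Finset (Set α))

noncomputable def intersectionPoset : Finset (Set α) :=
  {t ∈ s.powerset.image fun S : Finset (Set α) => ⋂₀ (↑S : Set (Set α)) | t.Nonempty}

noncomputable def crosscutMobius (t : Set α) : ℤ :=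
  ∑ S ∈ s.powerset.filter fun S : Finset (Set α) => ⋂₀ ↑S = t, (-1) ^ #S

theorem coe_intersectionPoset_toFinset {A : Set (Set α)} (hA : A.Finite) :
    (intersectionPoset hA.toFinset : Set (Set α)) = {t | t.Nonempty ∧ ∃ S ⊆ A, t = ⋂₀ S} := by
  ext t
  simp only [intersectionPoset, coe_filter, mem_image, mem_powerset, Set.mem_ofPred]
  constructor
  · rintro ⟨⟨S, hS, rfl⟩, ht⟩
    exact ⟨ht, S, by simpa using hS, rfl⟩
  · rintro ⟨ht, S, hS, rfl⟩
    refine ⟨⟨(hA.subset hS).toFinset, ?_, by simp⟩, ht⟩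
    simpa using hS

theorem sum_crosscutMobius_filter_subset (hs : ∀ H ∈ s, H ≠ Set.univ) {t : Set α}
    (ht : t ∈ intersectionPoset s) :
    ∑ u ∈ intersectionPoset s with t ⊆ u, crosscutMobius s u =
      if t = Set.univ then 1 else 0 := by
  simp only [intersectionPoset, mem_filter, mem_image, mem_powerset] at ht
  obtain ⟨⟨S₀, hS₀, rfl⟩, hne⟩ := ht
  set t := ⋂₀ (S₀ : Set (Set α))
  have hmaps : ∀ S ∈ s.powerset.filter (fun S : Finset (Set α) => t ⊆ ⋂₀ (↑S : Set (Set α))),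
      ⋂₀ (↑S : Set (Set α)) ∈ (intersectionPoset s).filter (t ⊆ ·) := by
    intro S hS
    simp only [mem_filter, mem_powerset] at hS
    simp only [intersectionPoset, mem_filter, mem_image, mem_powerset]
    exact ⟨⟨⟨S, hS.1, rfl⟩, hne.mono hS.2⟩, hS.2⟩
  calc ∑ u ∈ intersectionPoset s with t ⊆ u, crosscutMobius s u
      = ∑ S ∈ s.powerset.filter fun S : Finset (Set α) => t ⊆ ⋂₀ ↑S, (-1 : ℤ) ^ #S := by
        rw [← sum_fiberwise_of_maps_to hmaps]
        refine sum_congr rfl fun u hu => ?_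
        rw [crosscutMobius, filter_filter]
        refine sum_congr (Finset.ext fun S => ?_) fun _ _ => rfl
        simp only [mem_filter] at hu ⊢
        constructor
        · rintro ⟨hS, rfl⟩; exact ⟨hS, hu.2, rfl⟩
        · rintro ⟨hS, -, rfl⟩; exact ⟨hS, rfl⟩
    _ = ∑ S ∈ (s.filter (t ⊆ ·)).powerset, (-1 : ℤ) ^ #S := by
        refine sum_congr (Finset.ext fun S => ?_) fun _ _ => rfl
        simp only [mem_filter, mem_powerset, Set.subset_sInter_iff, mem_coe, subset_iff]
        grind
    _ = if t = Set.univ then 1 else 0 := by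
        rw [sum_powerset_neg_one_pow_card]
        refine if_congr ?_ rfl rfl
        rw [filter_eq_empty_iff]
        constructor
        · intro h
          have : S₀ = ∅ := eq_empty_of_forall_notMem fun H hH =>
            h (hS₀ hH) (Set.sInter_subset_of_mem (mem_coe.2 hH))
          simp [t, this]
        · intro htop H hH hsub
          exact hs H hH (Set.univ_subset_iff.1 (htop ▸ hsub))

theorem eqOn_crosscutMobius (hs : ∀ H ∈ s, H ≠ Set.univ) {mu : Set α → ℤ}
    (hmu : ∀ t ∈ (intersectionPoset s : Set (Set α)),
      ∑ᶠ u ∈ {u ∈ (intersectionPoset s : Set (Set α)) | t ⊆ u}, mu u =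
        if t = Set.univ then 1 else 0) :
    Set.EqOn mu (crosscutMobius s) (intersectionPoset s) := by
  refine eqOn_of_forall_sum_filter_le_eq fun t ht => ?_
  have hfilter : {u ∈ (intersectionPoset s : Set (Set α)) | t ⊆ u} =
      ↑((intersectionPoset s).filter (t ⊆ ·)) := by
    rw [coe_filter]; rfl
  have := hmu t ht
  rw [hfilter, finsum_mem_coe_finset] at this
  rw [this, sum_crosscutMobius_filter_subset s hs ht]

theorem sum_crosscutMobius_mul (g : Set α → ℤ) (hg : g ∅ = 0) :
    ∑ t ∈ intersectionPoset s, crosscutMobius s t * g t =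
      ∑ S ∈ s.powerset, (-1) ^ #S * g (⋂₀ (↑S : Set (Set α))) := by
  rw [intersectionPoset, sum_filter_of_ne fun (t : Set α) _ h => ?_]
  · rw [← sum_fiberwise_of_maps_to fun (S : Finset (Set α)) hS =>
      mem_image_of_mem (fun S : Finset (Set α) => ⋂₀ (↑S : Set (Set α))) hS]
    refine sum_congr rfl fun t _ => ?_
    rw [crosscutMobius, sum_mul]
    exact sum_congr rfl fun S hS => by rw [(mem_filter.1 hS).2]
  · by_contra ht
    rw [Set.not_nonempty_iff_eq_empty.1 ht, hg, mul_zero] at h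
    exact h rfl

end Crosscut

section Flats

variable {k V : Type*} [Field k] [AddCommGroup V] [Module k V]

def hyperplane (φ : V →ₗ[k] k) (a : k) : AffineSubspace k V where
  carrier := {x | φ x = a}
  smul_vsub_vadd_mem' t p₁ p₂ p₃ h₁ h₂ h₃ := by
    simp_all [vsub_eq_sub, vadd_eq_add]

@[simp]
theorem mem_hyperplane {φ : V →ₗ[k] k} {a : k} {x : V} : x ∈ hyperplane φ a ↔ φ x = a := Iff.rfl

@[simp]
theorem coe_inf_hyperplane (E : AffineSubspace k V) (φ : V →ₗ[k] k) (a : k) :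
    ((E ⊓ hyperplane φ a : AffineSubspace k V) : Set V) = (E : Set V) ∩ {x | φ x = a} := rfl

theorem setOf_apply_eq_ne_univ {φ : V →ₗ[k] k} (hφ : φ ≠ 0) (a : k) : {x | φ x = a} ≠ Set.univ := by
  obtain ⟨x, hx⟩ := DFunLike.ne_iff.1 hφ
  intro h
  have hx' : φ x = a := (h.symm ▸ Set.mem_univ x :)
  have h0 : φ 0 = a := (h.symm ▸ Set.mem_univ 0 :)
  exact hx (by simp_all)

theorem direction_hyperplane {φ : V →ₗ[k] k} {a : k} {x : V} (hx : φ x = a) :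
    (hyperplane φ a).direction = LinearMap.ker φ := by
  ext v
  rw [AffineSubspace.mem_direction_iff_eq_vsub_right (mem_hyperplane.2 hx), LinearMap.mem_ker]
  constructor
  · rintro ⟨y, hy, rfl⟩
    simp_all [vsub_eq_sub]
  · intro hv
    exact ⟨v + x, by simp [hv, hx], by simp⟩

theorem finrank_direction_inf_hyperplane_add_one [FiniteDimensional k V]
    {E : AffineSubspace k V} {φ : V →ₗ[k] k} {a : k} {x y : V}
    (hx : x ∈ E) (hxa : φ x = a) (hy : y ∈ E) (hya : φ y ≠ a) :
    Module.finrank k (E ⊓ hyperplane φ a).direction + 1 = Module.finrank k E.direction := by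
  have hne : φ.domRestrict E.direction ≠ 0 := by
    intro h
    have := LinearMap.congr_fun h ⟨y -ᵥ x, AffineSubspace.vsub_mem_direction hy hx⟩
    simp [vsub_eq_sub, hxa, sub_eq_zero] at this
    exact hya this
  rw [← Module.Dual.finrank_ker_add_one_of_ne_zero hne, LinearMap.ker_domRestrict,
    AffineSubspace.direction_inf_of_mem hx (mem_hyperplane.2 hxa), direction_hyperplane hxa,
    ← Submodule.map_comap_subtype, Submodule.finrank_map_subtype_eq]

variable (k) in
/-- On flats this is the compactly supported Euler characteristic: `(-1) ^ dim` on nonempty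
flats and `0` on `∅`. -/
noncomputable def eulerCharc (t : Set V) : ℤ :=
  if t.Nonempty then (-1) ^ Module.finrank k (affineSpan k t).direction else 0

@[simp]
theorem eulerCharc_empty : eulerCharc k (∅ : Set V) = 0 := by
  simp [eulerCharc]

theorem eulerCharc_coe {F : AffineSubspace k V} (hF : F ≠ ⊥) :
    eulerCharc k (F : Set V) = (-1) ^ Module.finrank k F.direction := by
  rw [eulerCharc, if_pos ((AffineSubspace.nonempty_iff_ne_bot F).2 hF),
    AffineSubspace.affineSpan_coe]

theorem eulerCharc_inf_hyperplane [FiniteDimensional k V] {E : AffineSubspace k V}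
    {φ : V →ₗ[k] k} {a : k} (hE : ¬E ≤ hyperplane φ a) (hEH : E ⊓ hyperplane φ a ≠ ⊥) :
    eulerCharc k ((E ⊓ hyperplane φ a : AffineSubspace k V) : Set V) =
      -eulerCharc k (E : Set V) := by
  obtain ⟨x, hxE, hxH⟩ := (AffineSubspace.nonempty_iff_ne_bot _).2 hEH
  obtain ⟨y, hyE, hyH⟩ := Set.not_subset.1 hE
  have hE' : E ≠ ⊥ := fun h => by simp [h] at hxE
  rw [eulerCharc_coe hEH, eulerCharc_coe hE',
    ← finrank_direction_inf_hyperplane_add_one hxE hxH hyE hyH, pow_succ, mul_neg_one, neg_neg]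

end Flats

section Arrangement

variable {V ι : Type*} [NormedAddCommGroup V] [NormedSpace ℝ V] (f : ι → V →ₗ[ℝ] ℝ) (c : ι → ℝ)

def cell (s S : Finset ι) : Set V :=
  ⋂ i ∈ s, if i ∈ S then {x | c i < f i x} else {x | f i x < c i}

theorem isOpen_cell [FiniteDimensional ℝ V] (s S : Finset ι) : IsOpen (cell f c s S) :=
  isOpen_biInter_finset fun i _ => by
    split_ifs
    exacts [isOpen_lt continuous_const (f i).continuous_of_finiteDimensional,
      isOpen_lt (f i).continuous_of_finiteDimensional continuous_const]

theorem convex_cell (s S : Finset ι) : Convex ℝ (cell f c s S) :=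
  convex_iInter₂ fun i _ => by
    split_ifs
    exacts [convex_halfSpace_gt (f i).isLinear _, convex_halfSpace_lt (f i).isLinear _]

variable {f c}

theorem ne_of_mem_cell {s S : Finset ι} {i : ι} {x : V} (hi : i ∈ s) (hx : x ∈ cell f c s S) :
    f i x ≠ c i := by
  have := Set.mem_iInter₂.1 hx i hi
  split_ifs at this
  exacts [this.ne', this.ne]

theorem mem_cell_iff {s S : Finset ι} (hS : S ⊆ s) {x : V} :
    x ∈ cell f c s S ↔ (∀ i ∈ s, f i x ≠ c i) ∧ S = s.filter fun i => c i < f i x := by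
  refine ⟨fun hx => ⟨fun i hi => ne_of_mem_cell hi hx, ?_⟩, ?_⟩
  · ext i
    have := fun hi => Set.mem_iInter₂.1 hx i hi
    by_cases hiS : i ∈ S
    · simp_all [hS hiS]
    · simp only [hiS, mem_filter, false_iff, not_and, not_lt]
      exact fun hi => (by simpa [hiS] using this hi : f i x < c i).le
  · rintro ⟨hne, rfl⟩
    refine Set.mem_iInter₂.2 fun i hi => ?_
    by_cases hlt : c i < f i x
    · simp [hi, hlt]
    · simpa [hi, hlt] using lt_of_le_of_ne (not_lt.1 hlt) (hne i hi)

theorem cell_insert {s S : Finset ι} {i : ι} (hi : i ∉ s) (hS : S ⊆ s) :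
    cell f c (insert i s) S = cell f c s S ∩ {x | f i x < c i} := by
  rw [cell, set_biInter_insert, if_neg fun h => hi (hS h), Set.inter_comm]
  rfl

theorem cell_insert_insert {s S : Finset ι} {i : ι} (hi : i ∉ s) :
    cell f c (insert i s) (insert i S) = cell f c s S ∩ {x | c i < f i x} := by
  rw [cell, set_biInter_insert, if_pos (mem_insert_self i S), Set.inter_comm, cell]
  congr 1
  refine Set.iInter₂_congr fun j hj => ?_
  simp only [mem_insert, ne_of_mem_of_not_mem hj hi, false_or]

variable (f c)

noncomputable def regionCount (s : Finset ι) (E : AffineSubspace ℝ V) : ℕ :=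
  #{S ∈ s.powerset | (cell f c s S ∩ E).Nonempty}

/-- Whitney's formula for `χ_A(-1)`, taken relative to the flat `E`. -/
noncomputable def whitneySum (s : Finset ι) (E : AffineSubspace ℝ V) : ℤ :=
  ∑ S ∈ s.powerset, (-1) ^ #S * eulerCharc ℝ ((E : Set V) ∩ ⋂ i ∈ S, {x | f i x = c i})

variable {f c}

@[simp]
theorem regionCount_bot (s : Finset ι) : regionCount f c s ⊥ = 0 := by
  simp [regionCount]

theorem regionCount_insert_of_le {s : Finset ι} {i : ι} {E : AffineSubspace ℝ V}
    (hE : E ≤ hyperplane (f i) (c i)) : regionCount f c (insert i s) E = 0 := by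
  refine card_eq_zero.2 (filter_eq_empty_iff.2 fun S _ ⟨x, hx, hxE⟩ => ?_)
  exact ne_of_mem_cell (mem_insert_self i s) hx (hE hxE)

theorem regionCount_insert [FiniteDimensional ℝ V] {s : Finset ι} {i : ι} (hi : i ∉ s)
    {E : AffineSubspace ℝ V} (hE : ¬E ≤ hyperplane (f i) (c i)) :
    regionCount f c (insert i s) E =
      regionCount f c s E + regionCount f c s (E ⊓ hyperplane (f i) (c i)) := by
  obtain ⟨y, hyE, hy⟩ := Set.not_subset.1 hE
  simp only [regionCount, card_filter]
  rw [sum_powerset_insert hi, ← sum_add_distrib, ← sum_add_distrib]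
  refine sum_congr rfl fun S hS => ?_
  rw [cell_insert hi (mem_powerset.1 hS), cell_insert_insert hi, coe_inf_hyperplane,
    ← Set.inter_assoc]
  simp only [Set.inter_right_comm _ _ (E : Set V)]
  refine ite_nonempty_lt_add_ite_nonempty_gt ((convex_cell f c s S).inter E.convex).isPreconnected
    (f i).continuous_of_finiteDimensional.continuousOn ?_
  rintro ⟨x, ⟨hxU, hxE⟩, hx : f i x = c i⟩
  have hyx : f i (y -ᵥ x) ≠ 0 := by
    simpa [vsub_eq_sub, sub_eq_zero, hx] using hy
  simpa only [hx] using AffineSubspace.nonempty_lt_and_gt_of_isOpen (isOpen_cell f c s S) hxU hxE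
    (AffineSubspace.vsub_mem_direction hyE hxE) hyx

theorem whitneySum_insert {s : Finset ι} {i : ι} (hi : i ∉ s) (E : AffineSubspace ℝ V) :
    whitneySum f c (insert i s) E =
      whitneySum f c s E - whitneySum f c s (E ⊓ hyperplane (f i) (c i)) := by
  rw [whitneySum, sum_powerset_insert hi, whitneySum, whitneySum, sub_eq_add_neg,
    ← sum_neg_distrib]
  congr 1
  refine sum_congr rfl fun S hS => ?_
  rw [card_insert_of_notMem fun h => hi (mem_powerset.1 hS h), set_biInter_insert,
    coe_inf_hyperplane, Set.inter_assoc, pow_succ]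
  ring

theorem eulerCharc_mul_regionCount [FiniteDimensional ℝ V] (s : Finset ι) (E : AffineSubspace ℝ V) :
    eulerCharc ℝ (E : Set V) * regionCount f c s E = whitneySum f c s E := by
  induction s using Finset.induction_on generalizing E with
  | empty =>
    by_cases hE : (E : Set V).Nonempty
    · simp [regionCount, whitneySum, cell, hE]
    · simp [eulerCharc, whitneySum, hE]
  | insert i s hi ih =>
    rw [whitneySum_insert hi, ← ih, ← ih]
    by_cases hE : E ≤ hyperplane (f i) (c i)
    · rw [regionCount_insert_of_le hE, inf_eq_left.2 hE]
      simp
    rw [regionCount_insert hi hE]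
    by_cases hEH : E ⊓ hyperplane (f i) (c i) = ⊥
    · simp [hEH]
    rw [eulerCharc_inf_hyperplane hE hEH]
    push_cast
    ring

theorem regionCount_top [FiniteDimensional ℝ V] (s : Finset ι) :
    (regionCount f c s ⊤ : ℤ) = (-1) ^ Module.finrank ℝ V *
      ∑ S ∈ s.powerset, (-1) ^ #S * eulerCharc ℝ (⋂ i ∈ S, {x | f i x = c i}) := by
  have h := eulerCharc_mul_regionCount (f := f) (c := c) s ⊤
  rw [eulerCharc_coe top_ne_bot, AffineSubspace.direction_top, finrank_top, whitneySum,
    AffineSubspace.top_coe] at h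
  simp only [Set.univ_inter] at h
  rw [← h, ← mul_assoc, ← pow_add, Even.neg_one_pow ⟨_, rfl⟩, one_mul]

theorem natCard_connectedComponents_compl_eq_regionCount [FiniteDimensional ℝ V] (s : Finset ι) :
    Nat.card (ConnectedComponents ↥(⋃ i ∈ s, {x : V | f i x = c i})ᶜ) = regionCount f c s ⊤ := by
  set X := (⋃ i ∈ s, {x : V | f i x = c i})ᶜ
  have hX (x : V) : x ∈ X ↔ ∀ i ∈ s, f i x ≠ c i := by simp [X]
  let σ : X → Finset ι := fun x => s.filter fun i => c i < f i x
  have hcell (x : X) : (x : V) ∈ cell f c s (σ x) :=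
    (mem_cell_iff (filter_subset _ _)).2 ⟨(hX x).1 x.2, rfl⟩
  have hσ (x y : X) (hy : (y : V) ∈ cell f c s (σ x)) : σ y = σ x :=
    ((mem_cell_iff (filter_subset _ _)).1 hy).2.symm
  have hcellX (S : Finset ι) (hS : S ⊆ s) : cell f c s S ⊆ X := fun x hx =>
    (hX x).2 ((mem_cell_iff hS).1 hx).1
  rw [IsLocallyConstant.natCard_connectedComponents (σ := σ), regionCount, ← Nat.card_eq_finsetCard]
  · congr
    ext S
    simp only [AffineSubspace.top_coe, Set.inter_univ, coe_filter, mem_powerset, Set.mem_range]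
    refine ⟨?_, fun ⟨hS, x, hx⟩ => ⟨⟨x, hcellX S hS hx⟩, ((mem_cell_iff hS).1 hx).2.symm⟩⟩
    rintro ⟨x, rfl⟩
    exact ⟨filter_subset _ _, x, hcell x⟩
  · exact (IsLocallyConstant.iff_exists_open _).2 fun x =>
      ⟨_, (isOpen_cell f c s (σ x)).preimage continuous_subtype_val, hcell x, fun y hy => hσ x y hy⟩
  · intro x y hxy
    have hpre : IsPreconnected (Subtype.val ⁻¹' cell f c s (σ x) : Set X) := by
      rw [← Topology.IsInducing.subtypeVal.isPreconnected_image, Subtype.image_preimage_coe,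
        Set.inter_eq_self_of_subset_right (hcellX _ (filter_subset _ _))]
      exact (convex_cell f c s _).isPreconnected
    exact hpre.subset_connectedComponent (hcell x) (hxy ▸ hcell y)

end Arrangement

end HyperplaneArrangement

open HyperplaneArrangement

/-- Zaslavsky's theorem: the number of regions (connected components of the complement
of the union of the hyperplanes) of a real arrangement `A` in an `n`-dimensional space
is `(-1)ⁿ χ_A(-1)`, where `χ_A(x) = Σ_{t ∈ L(A)} μ(0̂,t) x^{dim t}` is the
characteristic polynomial.  The Möbius function `μ(0̂,·)` of the intersection poset is
characterized by the hypothesis `hmu`. -/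
theorem zaslavsky_regions (n : ℕ) (A : Set (Set (Fin n → ℝ))) (hA : A.Finite)
    (hH : ∀ H ∈ A, IsHyperplane n H)
    (mu : Set (Fin n → ℝ) → ℤ)
    (hmu : ∀ t ∈ interPoset n A,
      (∑ᶠ s ∈ {s ∈ interPoset n A | t ⊆ s}, mu s) =
        if t = (Set.univ : Set (Fin n → ℝ)) then 1 else 0) :
    (Nat.card (ConnectedComponents ((⋃₀ A)ᶜ : Set (Fin n → ℝ))) : ℤ) =
      (-1) ^ n * ∑ᶠ t ∈ interPoset n A, mu t * (-1) ^ (interDim n t) := by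
  choose! f c hf hfc using hH
  set s := hA.toFinset
  have hfc' : ∀ H ∈ s, H = {x | f H x = c H} := fun H hH => hfc H (hA.mem_toFinset.1 hH)
  have hL : interPoset n A = intersectionPoset s := (coe_intersectionPoset_toFinset hA).symm
  rw [hL] at hmu
  have hmob := eqOn_crosscutMobius s
    (fun H hH => hfc' H hH ▸ setOf_apply_eq_ne_univ (hf H (hA.mem_toFinset.1 hH)) _) hmu
  have hunion : ⋃₀ A = ⋃ H ∈ s, {x | f H x = c H} := by
    rw [← hA.coe_toFinset, Set.sUnion_eq_biUnion]
    exact Set.iUnion₂_congr fun H hH => hfc' H hH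
  rw [hunion, natCard_connectedComponents_compl_eq_regionCount, regionCount_top,
    Module.finrank_fin_fun, hL, finsum_mem_coe_finset]
  congr 1
  calc ∑ S ∈ s.powerset, (-1) ^ #S * eulerCharc ℝ (⋂ H ∈ S, {x | f H x = c H})
      = ∑ S ∈ s.powerset, (-1) ^ #S * eulerCharc ℝ (⋂₀ (↑S : Set (Set (Fin n → ℝ)))) := by
        refine sum_congr rfl fun S hS => ?_
        rw [Set.sInter_eq_biInter, set_biInter_coe,
          Set.iInter₂_congr fun H hH => hfc' H (mem_powerset.1 hS hH)]
    _ = ∑ t ∈ intersectionPoset s, crosscutMobius s t * eulerCharc ℝ t :=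
        (sum_crosscutMobius_mul _ _ eulerCharc_empty).symm
    _ = ∑ t ∈ intersectionPoset s, mu t * (-1) ^ interDim n t :=
        sum_congr rfl fun t ht => by rw [hmob ht, eulerCharc, if_pos (mem_filter.1 ht).2, interDim]
end
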